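/- arXiv:2106.06477 — 3 statements merged into one kernel-verified Lean document; each statement's English description precedes it below -/
import Mathlib

section
/- Let R = {r_1,…,r_t} ⊆ {1,…,L−1} and Γ = {K_{r_1},…,K_{r_t}}, and let B_{ζs}(θ, R, Γ) be the composition of β embeddings adding K_{r_i} neurons to layer r_i for i = 1,…,t. Then for every parameter vector θ, the empirical risk of the network enlarged at all layers in R is preserved: R̂_emp(B_{ζs}(θ, R, Γ)) = R_emp(θ). -/
/-- Parameters of a fully connected feedforward network: `w ℓ j i` is the weight from
unit `i` of layer `ℓ-1` to unit `j` of layer `ℓ`, and `b ℓ j` is the bias of unit `j`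
of layer `ℓ`.  Layers are numbered `1, …, L` (layer `0` is the input); units within a
layer are numbered from `0`, so layer `ℓ` consists of the units `0, …, H ℓ - 1`. -/
structure NNParams where
  w : ℕ → ℕ → ℕ → ℝ
  b : ℕ → ℕ → ℝ

/-- `layerOut g H θ x ℓ i` : the output of unit `i` of layer `ℓ` on input `x`
(`layerOut g H θ x 0 = x`, and for `ℓ ≥ 1` it is `g` applied to the pre-activation). -/
noncomputable def layerOut (g : ℝ → ℝ) (H : ℕ → ℕ) (θ : NNParams) (x : ℕ → ℝ) :
    ℕ → ℕ → ℝ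
  | 0, i => x i
  | ℓ + 1, i =>
      g (∑ j ∈ Finset.range (H ℓ), θ.w (ℓ + 1) i j * layerOut g H θ x ℓ j + θ.b (ℓ + 1) i)

/-- Pre-activation `a_j^ℓ(x, θ)` of unit `j` of layer `ℓ ≥ 1`:
`a_j^ℓ = ∑_{i < H (ℓ-1)} w_{ji}^ℓ · (output of unit i of layer ℓ-1) + σ_j^ℓ`.
The outputs of the last layer `L` are `f_r(x,θ) = preact g H θ x L r` (linear output units). -/
noncomputable def preact (g : ℝ → ℝ) (H : ℕ → ℕ) (θ : NNParams) (x : ℕ → ℝ)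
    (ℓ j : ℕ) : ℝ :=
  ∑ i ∈ Finset.range (H (ℓ - 1)), θ.w ℓ j i * layerOut g H θ x (ℓ - 1) i + θ.b ℓ j

/-- Empirical risk `R_emp(θ) = (1/P) ∑_{p<P} ℒ(y^p, f(x^p, θ))`, where the network has
`L` layers with layer sizes given by `H`, the training inputs are `X p` and the labels
`Y p`, and `m` is the output dimension seen by the loss. -/
noncomputable def Remp (g : ℝ → ℝ) (H : ℕ → ℕ) (L P : ℕ) {m : ℕ}
    (X Y : ℕ → ℕ → ℝ) (loss : (ℕ → ℝ) → (Fin m → ℝ) → ℝ) (θ : NNParams) : ℝ :=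
  (1 / (P : ℝ)) * ∑ p ∈ Finset.range P,
    loss (Y p) (fun r => preact g H θ (X p) L r)

/-- Layer sizes of the network enlarged by adding `K` new neurons to layer `l`. -/
def enlargeH (H : ℕ → ℕ) (l K : ℕ) : ℕ → ℕ :=
  fun ℓ => if ℓ = l then H l + K else H ℓ

/-- The embedding `α_{ζv}` : copy all parameters, give the `k`-th new neuron of layer `l`
(`k = 0, …, K-1`, i.e. unit `H l + k`) the bias `ζ k` and incoming weights `v k`, and
set all weights from the new neurons to layer `l+1` to zero. -/
noncomputable def alphaEmb (H : ℕ → ℕ) (l K : ℕ) (ζ : ℕ → ℝ) (v : ℕ → ℕ → ℝ)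
    (θ : NNParams) : NNParams where
  w := fun ℓ j i =>
    if ℓ = l ∧ H l ≤ j then v (j - H l) i
    else if ℓ = l + 1 ∧ H l ≤ i then 0
    else θ.w ℓ j i
  b := fun ℓ j => if ℓ = l ∧ H l ≤ j then ζ (j - H l) else θ.b ℓ j

/-- The embedding `β_{ζs}` : copy all parameters except the biases of layer `l+1`, give
the `k`-th new neuron of layer `l` the bias `ζ k` and zero incoming weights, set the
outgoing weight from the `k`-th new neuron to unit `j` of layer `l+1` to `s j k`, and
replace the bias of unit `j` of layer `l+1` by `σ_j - ∑_{k<K} s j k · g (ζ k)`. -/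
noncomputable def betaEmb (g : ℝ → ℝ) (H : ℕ → ℕ) (l K : ℕ) (ζ : ℕ → ℝ)
    (s : ℕ → ℕ → ℝ) (θ : NNParams) : NNParams where
  w := fun ℓ j i =>
    if ℓ = l ∧ H l ≤ j then 0
    else if ℓ = l + 1 ∧ H l ≤ i then s j (i - H l)
    else θ.w ℓ j i
  b := fun ℓ j =>
    if ℓ = l ∧ H l ≤ j then ζ (j - H l)
    else if ℓ = l + 1 then θ.b (l + 1) j - ∑ k ∈ Finset.range K, s j k * g (ζ k)
    else θ.b ℓ j

/-- The embedding `γ_λ` : duplicate unit `h` of layer `l` into each of the `K` new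
neurons (same bias and incoming weights as unit `h`), and split the outgoing weights:
unit `h` keeps `lam 0 · w_{jh}^{l+1}` and the `k`-th new neuron (`k = 0, …, K-1`,
i.e. unit `H l + k`, corresponding to `λ_{k+1}` of the paper) gets
`lam (k+1) · w_{jh}^{l+1}`; all other parameters are copied. -/
noncomputable def gammaEmb (H : ℕ → ℕ) (l K : ℕ) (h : ℕ) (lam : ℕ → ℝ)
    (θ : NNParams) : NNParams where
  w := fun ℓ j i =>
    if ℓ = l ∧ H l ≤ j then θ.w l h i
    else if ℓ = l + 1 ∧ i = h then lam 0 * θ.w (l + 1) j h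
    else if ℓ = l + 1 ∧ H l ≤ i then lam (i - H l + 1) * θ.w (l + 1) j h
    else θ.w ℓ j i
  b := fun ℓ j => if ℓ = l ∧ H l ≤ j then θ.b l h else θ.b ℓ j

/-- `θ` with the single weight `w ℓ j i` replaced by `t`. -/
noncomputable def updW (θ : NNParams) (ℓ j i : ℕ) (t : ℝ) : NNParams :=
  ⟨fun ℓ' j' i' => if ℓ' = ℓ ∧ j' = j ∧ i' = i then t else θ.w ℓ' j' i', θ.b⟩

/-- `θ` with the single bias `b ℓ j` replaced by `t`. -/
noncomputable def updB (θ : NNParams) (ℓ j : ℕ) (t : ℝ) : NNParams :=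
  ⟨θ.w, fun ℓ' j' => if ℓ' = ℓ ∧ j' = j then t else θ.b ℓ' j'⟩

/-- `∇ R_emp(θ) = 0` : every partial derivative of the empirical risk with respect to an
actual network parameter (a weight `w ℓ j i` or a bias `b ℓ j`, `1 ≤ ℓ ≤ L`, `j < H ℓ`,
`i < H (ℓ-1)`) vanishes at `θ`. -/
def IsCritical (g : ℝ → ℝ) (H : ℕ → ℕ) (L P : ℕ) {m : ℕ}
    (X Y : ℕ → ℕ → ℝ) (loss : (ℕ → ℝ) → (Fin m → ℝ) → ℝ) (θ : NNParams) : Prop :=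
  (∀ ℓ j i, 1 ≤ ℓ → ℓ ≤ L → j < H ℓ → i < H (ℓ - 1) →
      deriv (fun t => Remp g H L P X Y loss (updW θ ℓ j i t)) (θ.w ℓ j i) = 0) ∧
  ∀ ℓ j, 1 ≤ ℓ → ℓ ≤ L → j < H ℓ →
      deriv (fun t => Remp g H L P X Y loss (updB θ ℓ j t)) (θ.b ℓ j) = 0

/-- Layer sizes after enlarging layer `p.1` by `p.2` neurons for each pair in the list. -/
def multiEnlargeH : (ℕ → ℕ) → List (ℕ × ℕ) → (ℕ → ℕ)
  | H, [] => H
  | H, (l, K) :: rest => multiEnlargeH (enlargeH H l K) rest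

/-- Composition of `α` embeddings: for each `(l, K)` in the list (in order), add `K` new
neurons to layer `l` via `α` with biases `ζ l` and incoming weights `v l`. -/
noncomputable def multiAlpha (ζ : ℕ → ℕ → ℝ) (v : ℕ → ℕ → ℕ → ℝ) :
    (ℕ → ℕ) → List (ℕ × ℕ) → NNParams → NNParams
  | _, [], θ => θ
  | H, (l, K) :: rest, θ =>
      multiAlpha ζ v (enlargeH H l K) rest (alphaEmb H l K (ζ l) (v l) θ)

noncomputable def multiBeta (g : ℝ → ℝ) (ζ : ℕ → ℕ → ℝ) (s : ℕ → ℕ → ℕ → ℝ) :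
    (ℕ → ℕ) → List (ℕ × ℕ) → NNParams → NNParams
  | _, [], θ => θ
  | H, (l, K) :: rest, θ =>
      multiBeta g ζ s (enlargeH H l K) rest (betaEmb g H l K (ζ l) (s l) θ)

noncomputable def multiGamma (hsel : ℕ → ℕ) (lam : ℕ → ℕ → ℝ) :
    (ℕ → ℕ) → List (ℕ × ℕ) → NNParams → NNParams
  | _, [], θ => θ
  | H, (l, K) :: rest, θ =>
      multiGamma hsel lam (enlargeH H l K) rest (gammaEmb H l K (hsel l) (lam l) θ)

/-- A single enlargement step: either a `β` embedding with zero outgoing weights, or a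
`γ` embedding. -/
inductive EmbStep where
  | beta (l K : ℕ) (ζ : ℕ → ℝ)
  | gamma (l K : ℕ) (h : ℕ) (lam : ℕ → ℝ)

def EmbStep.layer : EmbStep → ℕ
  | .beta l _ _ => l
  | .gamma l _ _ _ => l

def EmbStep.count : EmbStep → ℕ
  | .beta _ K _ => K
  | .gamma _ K _ _ => K

noncomputable def EmbStep.apply (g : ℝ → ℝ) (H : ℕ → ℕ) (θ : NNParams) : EmbStep → NNParams
  | .beta l K ζ => betaEmb g H l K ζ (fun _ _ => 0) θ
  | .gamma l K h lam => gammaEmb H l K h lam θ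

def EmbStep.OK (H : ℕ → ℕ) (L : ℕ) : EmbStep → Prop
  | .beta l _ _ => 1 ≤ l ∧ l + 1 ≤ L
  | .gamma l K h lam => 1 ≤ l ∧ l + 1 ≤ L ∧ h < H l ∧ ∑ i ∈ Finset.range (K + 1), lam i = 1

noncomputable def applySteps (g : ℝ → ℝ) : (ℕ → ℕ) → List EmbStep → NNParams → NNParams
  | _, [], θ => θ
  | H, st :: rest, θ =>
      applySteps g (enlargeH H st.layer st.count) rest (EmbStep.apply g H θ st)

def stepsH : (ℕ → ℕ) → List EmbStep → (ℕ → ℕ)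
  | H, [] => H
  | H, st :: rest => stepsH (enlargeH H st.layer st.count) rest

/-! A `β` embedding gives each new neuron zero incoming weights, so it outputs the constant
`g (ζ k)` on every input; its contribution `s j k · g (ζ k)` to unit `j` of the next layer is
exactly what was subtracted from that unit's bias. Hence every old unit, in particular every
output, computes the same function as before, and each embedding of the composition preserves
the risk. -/

theorem layerOut_succ (g : ℝ → ℝ) (H : ℕ → ℕ) (θ : NNParams) (x : ℕ → ℝ) (ℓ i : ℕ) :
    layerOut g H θ x (ℓ + 1) i = g (preact g H θ x (ℓ + 1) i) :=
  rfl

section BetaEmb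

variable (g : ℝ → ℝ) (H : ℕ → ℕ) {l : ℕ} (K : ℕ) (ζ : ℕ → ℝ) (s : ℕ → ℕ → ℝ)
  (θ : NNParams) (x : ℕ → ℝ)

theorem preact_betaEmb_of_layerOut (hl : 1 ≤ l) {ℓ : ℕ}
    (hprev : ∀ i, layerOut g (enlargeH H l K) (betaEmb g H l K ζ s θ) x (ℓ - 1) i =
      if ℓ - 1 = l ∧ H l ≤ i then g (ζ (i - H l)) else layerOut g H θ x (ℓ - 1) i)
    (j : ℕ) :
    preact g (enlargeH H l K) (betaEmb g H l K ζ s θ) x ℓ j =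
      if ℓ = l ∧ H l ≤ j then ζ (j - H l) else preact g H θ x ℓ j := by
  by_cases hnew : ℓ = l ∧ H l ≤ j
  · simp [preact, betaEmb, hnew]
  rw [if_neg hnew]
  by_cases hnext : ℓ = l + 1
  · subst hnext
    simp only [Nat.add_sub_cancel] at hprev
    have hold : ∀ i ∈ Finset.range (H l),
        (betaEmb g H l K ζ s θ).w (l + 1) j i *
            layerOut g (enlargeH H l K) (betaEmb g H l K ζ s θ) x l i =
          θ.w (l + 1) j i * layerOut g H θ x l i := by
      intro i hi
      have hi : ¬H l ≤ i := by simpa using hi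
      rw [hprev]
      simp [betaEmb, hi]
    have hadded : ∀ k ∈ Finset.range K,
        (betaEmb g H l K ζ s θ).w (l + 1) j (H l + k) *
            layerOut g (enlargeH H l K) (betaEmb g H l K ζ s θ) x l (H l + k) =
          s j k * g (ζ k) := by
      intro k _
      rw [hprev]
      simp [betaEmb]
    simp only [preact, Nat.add_sub_cancel, enlargeH, if_true, Finset.sum_range_add,
      Finset.sum_congr rfl hold, Finset.sum_congr rfl hadded]
    simp [betaEmb]
  · have hlayer : ℓ - 1 ≠ l := by omega
    have hunit : ∀ i, (betaEmb g H l K ζ s θ).w ℓ j i = θ.w ℓ j i := by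
      intro i
      simp only [betaEmb]
      rw [if_neg hnew, if_neg (by tauto)]
    have hbias : (betaEmb g H l K ζ s θ).b ℓ j = θ.b ℓ j := by
      simp only [betaEmb]
      rw [if_neg hnew, if_neg hnext]
    simp [preact, enlargeH, hlayer, hunit, hbias, hprev]

theorem layerOut_betaEmb (hl : 1 ≤ l) (ℓ i : ℕ) :
    layerOut g (enlargeH H l K) (betaEmb g H l K ζ s θ) x ℓ i =
      if ℓ = l ∧ H l ≤ i then g (ζ (i - H l)) else layerOut g H θ x ℓ i := by
  induction ℓ generalizing i with
  | zero => simp [layerOut, show 0 ≠ l by omega]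
  | succ ℓ ih =>
    rw [layerOut_succ, layerOut_succ, preact_betaEmb_of_layerOut g H K ζ s θ x hl (ℓ := ℓ + 1) ih]
    split_ifs <;> rfl

theorem Remp_betaEmb (L P : ℕ) {m : ℕ} (X Y : ℕ → ℕ → ℝ)
    (loss : (ℕ → ℝ) → (Fin m → ℝ) → ℝ) (hl : 1 ≤ l) (hlL : l ≠ L) :
    Remp g (enlargeH H l K) L P X Y loss (betaEmb g H l K ζ s θ) = Remp g H L P X Y loss θ := by
  have hout (p r : ℕ) :
      preact g (enlargeH H l K) (betaEmb g H l K ζ s θ) (X p) L r = preact g H θ (X p) L r := by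
    rw [preact_betaEmb_of_layerOut g H K ζ s θ (X p) hl (layerOut_betaEmb g H K ζ s θ (X p) hl _),
      if_neg (by tauto)]
  simp only [Remp, hout]

end BetaEmb

theorem Remp_multiBeta (g : ℝ → ℝ) (ζ : ℕ → ℕ → ℝ) (s : ℕ → ℕ → ℕ → ℝ) (L P : ℕ) {m : ℕ}
    (X Y : ℕ → ℕ → ℝ) (loss : (ℕ → ℝ) → (Fin m → ℝ) → ℝ) (H : ℕ → ℕ) (RG : List (ℕ × ℕ))
    (hR : ∀ p ∈ RG, 1 ≤ p.1 ∧ p.1 ≠ L) (θ : NNParams) :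
    Remp g (multiEnlargeH H RG) L P X Y loss (multiBeta g ζ s H RG θ) =
      Remp g H L P X Y loss θ := by
  induction RG generalizing H θ with
  | nil => rfl
  | cons p rest ih =>
    obtain ⟨l, K⟩ := p
    obtain ⟨hl, hlL⟩ := hR (l, K) List.mem_cons_self
    rw [multiEnlargeH, multiBeta, ih _ (fun q hq => hR q (List.mem_cons_of_mem _ hq)),
      Remp_betaEmb g H K (ζ l) (s l) θ L P X Y loss hl hlL]

theorem multiBeta_preserves_Remp_general
    (g : ℝ → ℝ) (H : ℕ → ℕ) (L P : ℕ) (X Y : ℕ → ℕ → ℝ)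
    (loss : (ℕ → ℝ) → (Fin (H L) → ℝ) → ℝ)
    (RG : List (ℕ × ℕ))
    (hR : ∀ p ∈ RG, 1 ≤ p.1 ∧ p.1 + 1 ≤ L)
    (ζ : ℕ → ℕ → ℝ) (s : ℕ → ℕ → ℕ → ℝ) (θ : NNParams) :
    Remp g (multiEnlargeH H RG) L P X Y loss (multiBeta g ζ s H RG θ)
      = Remp g H L P X Y loss θ :=
  Remp_multiBeta g ζ s L P X Y loss H RG
    (fun p hp => ⟨(hR p hp).1, by have := (hR p hp).2; omega⟩) θ

/-- Let `RG = [(r_1, K_{r_1}), …, (r_t, K_{r_t})]` describe adding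
`K_{r_i}` neurons to the (pairwise distinct) hidden layers `r_i ∈ {1, …, L-1}`.  Then
for every parameter vector `θ`, the composition of `β` embeddings preserves the empirical
risk: `R̂_emp(B_{ζs}(θ, R, Γ)) = R_emp(θ)`. -/
theorem multiBeta_preserves_Remp
    (g : ℝ → ℝ) (H : ℕ → ℕ) (L P : ℕ) (X Y : ℕ → ℕ → ℝ)
    (loss : (ℕ → ℝ) → (Fin (H L) → ℝ) → ℝ)
    (RG : List (ℕ × ℕ)) (hnd : (RG.map Prod.fst).Nodup)
    (hR : ∀ p ∈ RG, 1 ≤ p.1 ∧ p.1 + 1 ≤ L)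
    (ζ : ℕ → ℕ → ℝ) (s : ℕ → ℕ → ℕ → ℝ) (θ : NNParams) :
    Remp g (multiEnlargeH H RG) L P X Y loss (multiBeta g ζ s H RG θ)
      = Remp g H L P X Y loss θ :=
  multiBeta_preserves_Remp_general g H L P X Y loss RG hR ζ s θ
end

section
/- Let the activation function g and the loss ℒ (in its second argument) be differentiable, and let θ satisfy ∇_θ R_emp(θ) = 0. Let R = {r_1,…,r_t} ⊆ {1,…,L−1}, Γ = {K_{r_1},…,K_{r_t}}, and let θ̂ = B_{ζ0}(θ, R, Γ) be the composition of β embeddings with zero outgoing weights adding K_{r_i} neurons to layer r_i for i = 1,…,t. Then θ̂ is a stationary point of the empirical risk of the enlarged network: ∇_{θ̂} R̂_emp(θ̂) = 0. -/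
/-!
The new neurons have zero incoming weights, so each of them outputs the constant `g (ζ k)`,
and zero outgoing weights, so the enlarged network computes exactly what the original one
computes. Perturbing any parameter other than an outgoing weight of a new neuron therefore
either leaves the risk unchanged or perturbs the corresponding parameter of the original
network. Perturbing the outgoing weight from new neuron `k` to unit `j` of layer `l + 1` by
`t` acts like shifting the bias of that unit by `g (ζ k) * t`, so this partial derivative is
`g (ζ k)` times a partial derivative of the original risk, which vanishes. Embedding one
layer at a time gives the general case.
-/

open Finset

lemma deriv_comp_const_add_mul (F : ℝ → ℝ) (c a x : ℝ) :
    deriv (fun t => F (c + a * t)) x = a * deriv F (c + a * x) := by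
  simpa only [smul_eq_mul, deriv_comp_const_add] using
    deriv_comp_mul_left a (fun u => F (c + u)) x

lemma layerOut_eq_of_incoming_zero {g : ℝ → ℝ} {H : ℕ → ℕ} {θ : NNParams} {x : ℕ → ℝ}
    {l j : ℕ} (hl : 1 ≤ l) (hzero : ∀ i, θ.w l j i = 0) :
    layerOut g H θ x l j = g (θ.b l j) := by
  obtain ⟨l, rfl⟩ : ∃ l', l = l' + 1 := ⟨l - 1, by omega⟩
  simp [layerOut, hzero]

section Enlarge

variable {g : ℝ → ℝ} {H : ℕ → ℕ} {l K : ℕ}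

lemma enlargeH_self : enlargeH H l K l = H l + K := if_pos rfl

lemma enlargeH_of_ne {ℓ : ℕ} (h : ℓ ≠ l) : enlargeH H l K ℓ = H ℓ := if_neg h

lemma lt_of_lt_enlargeH {ℓ j : ℕ} (hj : j < enlargeH H l K ℓ) (hold : ℓ = l → j < H l) :
    j < H ℓ := by
  by_cases hℓ : ℓ = l
  · subst hℓ
    exact hold rfl
  · rwa [enlargeH_of_ne hℓ] at hj

def OldParamsAgree (H : ℕ → ℕ) (l : ℕ) (θ₁ θ₀ : NNParams) : Prop :=
  (∀ ℓ j i, (ℓ = l → j < H l) → (ℓ = l + 1 → i < H l) → θ₁.w ℓ j i = θ₀.w ℓ j i) ∧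
  ∀ ℓ j, ℓ ≠ l + 1 → (ℓ = l → j < H l) → θ₁.b ℓ j = θ₀.b ℓ j

noncomputable def newUnitsInput (g : ℝ → ℝ) (H : ℕ → ℕ) (l K : ℕ) (θ : NNParams)
    (x : ℕ → ℝ) (j : ℕ) : ℝ :=
  ∑ k ∈ range K, θ.w (l + 1) j (H l + k) * layerOut g (enlargeH H l K) θ x l (H l + k)

variable {θ₀ θ₁ : NNParams} {x : ℕ → ℝ}

lemma preact_succ_enlargeH_eq (hagree : OldParamsAgree H l θ₁ θ₀)
    (hbias : ∀ j, θ₁.b (l + 1) j + newUnitsInput g H l K θ₁ x j = θ₀.b (l + 1) j)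
    {ℓ : ℕ} (hout : ∀ i, (ℓ = l → i < H l) →
      layerOut g (enlargeH H l K) θ₁ x ℓ i = layerOut g H θ₀ x ℓ i)
    {j : ℕ} (hj : ℓ + 1 = l → j < H l) :
    preact g (enlargeH H l K) θ₁ x (ℓ + 1) j = preact g H θ₀ x (ℓ + 1) j := by
  simp only [preact, Nat.add_sub_cancel]
  by_cases hℓ : ℓ = l
  · subst hℓ
    have hold : ∀ i ∈ range (H ℓ), θ₁.w (ℓ + 1) j i * layerOut g (enlargeH H ℓ K) θ₁ x ℓ i =
        θ₀.w (ℓ + 1) j i * layerOut g H θ₀ x ℓ i := fun i hi => by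
      rw [mem_range] at hi
      rw [hagree.1 _ _ _ (by omega) fun _ => hi, hout i fun _ => hi]
    rw [enlargeH_self, sum_range_add, sum_congr rfl hold, ← hbias j, newUnitsInput]
    ring
  · have hold : ∀ i ∈ range (H ℓ), θ₁.w (ℓ + 1) j i * layerOut g (enlargeH H l K) θ₁ x ℓ i =
        θ₀.w (ℓ + 1) j i * layerOut g H θ₀ x ℓ i := fun i _ => by
      rw [hagree.1 _ _ _ hj (by omega), hout i (absurd · hℓ)]
    rw [enlargeH_of_ne hℓ, sum_congr rfl hold, hagree.2 _ _ (by omega) hj]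

lemma layerOut_enlargeH_eq (hagree : OldParamsAgree H l θ₁ θ₀)
    (hbias : ∀ j, θ₁.b (l + 1) j + newUnitsInput g H l K θ₁ x j = θ₀.b (l + 1) j) :
    ∀ ℓ i, (ℓ = l → i < H l) →
      layerOut g (enlargeH H l K) θ₁ x ℓ i = layerOut g H θ₀ x ℓ i
  | 0, _, _ => rfl
  | ℓ + 1, _, hi => congrArg g <|
      preact_succ_enlargeH_eq hagree hbias (layerOut_enlargeH_eq hagree hbias ℓ) hi

variable {m L P : ℕ} {X Y : ℕ → ℕ → ℝ} {loss : (ℕ → ℝ) → (Fin m → ℝ) → ℝ}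

lemma Remp_enlargeH_eq (hL : l + 1 ≤ L) (hagree : OldParamsAgree H l θ₁ θ₀)
    (hbias : ∀ x j, θ₁.b (l + 1) j + newUnitsInput g H l K θ₁ x j = θ₀.b (l + 1) j) :
    Remp g (enlargeH H l K) L P X Y loss θ₁ = Remp g H L P X Y loss θ₀ := by
  obtain ⟨L, rfl⟩ : ∃ L', L = L' + 1 := ⟨L - 1, by omega⟩
  simp only [Remp]
  congr 2 with p : 1
  congr 1 with r
  exact preact_succ_enlargeH_eq hagree (hbias _)
    (layerOut_enlargeH_eq hagree (hbias _) L) (by omega)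

lemma Remp_enlargeH_eq_of_outgoing_zero (hL : l + 1 ≤ L) (hagree : OldParamsAgree H l θ₁ θ₀)
    (hbias : ∀ j, θ₁.b (l + 1) j = θ₀.b (l + 1) j)
    (hzero : ∀ j k, θ₁.w (l + 1) j (H l + k) = 0) :
    Remp g (enlargeH H l K) L P X Y loss θ₁ = Remp g H L P X Y loss θ₀ :=
  Remp_enlargeH_eq hL hagree fun _ j => by simp [newUnitsInput, hzero, hbias]

end Enlarge

section BetaZero

variable {g : ℝ → ℝ} {H : ℕ → ℕ} {l K : ℕ} {ζ : ℕ → ℝ} {θ : NNParams}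

@[simp]
lemma betaEmb_zero_w (ℓ j i : ℕ) :
    (betaEmb g H l K ζ (fun _ _ => 0) θ).w ℓ j i =
      if ℓ = l ∧ H l ≤ j ∨ ℓ = l + 1 ∧ H l ≤ i then 0 else θ.w ℓ j i := by
  simp only [betaEmb]
  split_ifs <;> first | rfl | (exfalso; omega)

@[simp]
lemma betaEmb_zero_b (ℓ j : ℕ) :
    (betaEmb g H l K ζ (fun _ _ => 0) θ).b ℓ j =
      if ℓ = l ∧ H l ≤ j then ζ (j - H l) else θ.b ℓ j := by
  simp only [betaEmb, zero_mul, sum_const_zero, sub_zero]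
  split_ifs <;> simp_all

variable {m L P : ℕ} {X Y : ℕ → ℕ → ℝ} {loss : (ℕ → ℝ) → (Fin m → ℝ) → ℝ}

lemma Remp_updW_betaEmb_zero_of_new (hL : l + 1 ≤ L) {j i : ℕ} (hj : H l ≤ j) (t : ℝ) :
    Remp g (enlargeH H l K) L P X Y loss (updW (betaEmb g H l K ζ (fun _ _ => 0) θ) l j i t) =
      Remp g H L P X Y loss θ := by
  refine Remp_enlargeH_eq_of_outgoing_zero hL ⟨?_, ?_⟩ ?_ ?_ <;> intros <;>
    simp only [updW, betaEmb_zero_w, betaEmb_zero_b] <;> split_ifs <;>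
    first | rfl | (exfalso; omega) | simp_all

lemma Remp_updW_betaEmb_zero (hL : l + 1 ≤ L) {ℓ j i : ℕ} (hi : ℓ = l + 1 → i < H l)
    (t : ℝ) :
    Remp g (enlargeH H l K) L P X Y loss (updW (betaEmb g H l K ζ (fun _ _ => 0) θ) ℓ j i t) =
      Remp g H L P X Y loss (updW θ ℓ j i t) := by
  refine Remp_enlargeH_eq_of_outgoing_zero hL ⟨?_, ?_⟩ ?_ ?_ <;> intros <;>
    simp only [updW, betaEmb_zero_w, betaEmb_zero_b] <;> split_ifs <;>
    first | rfl | (exfalso; omega) | simp_all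

lemma Remp_updB_betaEmb_zero_of_new (hL : l + 1 ≤ L) {j : ℕ} (hj : H l ≤ j) (t : ℝ) :
    Remp g (enlargeH H l K) L P X Y loss (updB (betaEmb g H l K ζ (fun _ _ => 0) θ) l j t) =
      Remp g H L P X Y loss θ := by
  refine Remp_enlargeH_eq_of_outgoing_zero hL ⟨?_, ?_⟩ ?_ ?_ <;> intros <;>
    simp only [updB, betaEmb_zero_w, betaEmb_zero_b] <;> split_ifs <;>
    first | rfl | (exfalso; omega) | simp_all

lemma Remp_updB_betaEmb_zero (hL : l + 1 ≤ L) (ℓ j : ℕ) (t : ℝ) :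
    Remp g (enlargeH H l K) L P X Y loss (updB (betaEmb g H l K ζ (fun _ _ => 0) θ) ℓ j t) =
      Remp g H L P X Y loss (updB θ ℓ j t) := by
  refine Remp_enlargeH_eq_of_outgoing_zero hL ⟨?_, ?_⟩ ?_ ?_ <;> intros <;>
    simp only [updB, betaEmb_zero_w, betaEmb_zero_b] <;> split_ifs <;>
    first | rfl | (exfalso; omega) | simp_all

lemma Remp_updW_betaEmb_zero_of_outgoing (hl : 1 ≤ l) (hL : l + 1 ≤ L) {j i : ℕ}
    (hi : H l ≤ i) (hiK : i < H l + K) (t : ℝ) :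
    Remp g (enlargeH H l K) L P X Y loss
        (updW (betaEmb g H l K ζ (fun _ _ => 0) θ) (l + 1) j i t) =
      Remp g H L P X Y loss (updB θ (l + 1) j (θ.b (l + 1) j + g (ζ (i - H l)) * t)) := by
  set θ₁ := updW (betaEmb g H l K ζ (fun _ _ => 0) θ) (l + 1) j i t
  refine Remp_enlargeH_eq hL ⟨?_, ?_⟩ fun x j' => ?_
  · intros
    simp only [θ₁, updW, betaEmb_zero_w]
    split_ifs <;> first | rfl | (exfalso; omega)
  · intros
    simp only [θ₁, updW, updB, betaEmb_zero_b]
    split_ifs <;> first | rfl | (exfalso; omega)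
  · have hnew : ∀ k, layerOut g (enlargeH H l K) θ₁ x l (H l + k) = g (ζ k) := fun k => by
      rw [layerOut_eq_of_incoming_zero hl fun i' => by simp [θ₁, updW]]
      simp [θ₁, updW]
    have hweight : ∀ k, θ₁.w (l + 1) j' (H l + k) = if j' = j ∧ k = i - H l then t else 0 :=
      fun k => by
        simp only [θ₁, updW, betaEmb_zero_w, true_and]
        split_ifs <;> first | rfl | (exfalso; omega)
    simp only [newUnitsInput, hnew, hweight]
    by_cases hj' : j' = j
    · subst hj'
      simp [θ₁, updW, updB, mem_range.2 (show i - H l < K by omega), mul_comm]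
    · simp [θ₁, updW, updB, hj']

lemma IsCritical.betaEmb_zero (hl : 1 ≤ l) (hL : l + 1 ≤ L)
    (hθ : IsCritical g H L P X Y loss θ) :
    IsCritical g (enlargeH H l K) L P X Y loss (betaEmb g H l K ζ (fun _ _ => 0) θ) := by
  refine ⟨fun ℓ j i hℓ hℓL hj hi => ?_, fun ℓ j hℓ hℓL hj => ?_⟩
  · by_cases hnew : ℓ = l ∧ H l ≤ j
    · obtain ⟨rfl, hj'⟩ := hnew
      simp only [Remp_updW_betaEmb_zero_of_new hL hj', deriv_const]
    by_cases hout : ℓ = l + 1 ∧ H l ≤ i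
    · obtain ⟨rfl, hi'⟩ := hout
      rw [Nat.add_sub_cancel, enlargeH_self] at hi
      have hw : (betaEmb g H l K ζ (fun _ _ => 0) θ).w (l + 1) j i = 0 := by simp [hi']
      simp only [Remp_updW_betaEmb_zero_of_outgoing hl hL hi' hi, hw]
      rw [deriv_comp_const_add_mul (fun s => Remp g H L P X Y loss (updB θ (l + 1) j s)),
        mul_zero, add_zero, hθ.2 (l + 1) j hℓ hL (lt_of_lt_enlargeH hj (by omega)), mul_zero]
    have hw : (betaEmb g H l K ζ (fun _ _ => 0) θ).w ℓ j i = θ.w ℓ j i := by simp [hnew, hout]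
    rw [funext (Remp_updW_betaEmb_zero hL (by omega)), hw]
    exact hθ.1 ℓ j i hℓ hℓL (lt_of_lt_enlargeH hj (by omega)) (lt_of_lt_enlargeH hi (by omega))
  · by_cases hnew : ℓ = l ∧ H l ≤ j
    · obtain ⟨rfl, hj'⟩ := hnew
      simp only [Remp_updB_betaEmb_zero_of_new hL hj', deriv_const]
    have hb : (betaEmb g H l K ζ (fun _ _ => 0) θ).b ℓ j = θ.b ℓ j := by simp [hnew]
    rw [funext (Remp_updB_betaEmb_zero hL ℓ j), hb]
    exact hθ.2 ℓ j hℓ hℓL (lt_of_lt_enlargeH hj (by omega))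

lemma IsCritical.multiBeta_zero (hθ : IsCritical g H L P X Y loss θ) (RG : List (ℕ × ℕ))
    (hRG : ∀ p ∈ RG, 1 ≤ p.1 ∧ p.1 + 1 ≤ L) (ζ : ℕ → ℕ → ℝ) :
    IsCritical g (multiEnlargeH H RG) L P X Y loss (multiBeta g ζ (fun _ _ _ => 0) H RG θ) := by
  induction RG generalizing H θ with
  | nil => exact hθ
  | cons p RG ih =>
    obtain ⟨hl, hL⟩ := hRG p List.mem_cons_self
    exact ih (hθ.betaEmb_zero hl hL) fun q hq => hRG q (List.mem_cons_of_mem p hq)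

end BetaZero

theorem multiBeta_zero_is_critical_general
    (g : ℝ → ℝ) (H : ℕ → ℕ) (L P : ℕ) (X Y : ℕ → ℕ → ℝ)
    (loss : (ℕ → ℝ) → (Fin (H L) → ℝ) → ℝ)
    (RG : List (ℕ × ℕ))
    (hR : ∀ p ∈ RG, 1 ≤ p.1 ∧ p.1 + 1 ≤ L)
    (ζ : ℕ → ℕ → ℝ) (θ : NNParams)
    (hθ : IsCritical g H L P X Y loss θ)
    (θhat : NNParams) (hemb : θhat = multiBeta g ζ (fun _ _ _ => 0) H RG θ) :
    IsCritical g (multiEnlargeH H RG) L P X Y loss θhat := by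
  subst hemb
  exact hθ.multiBeta_zero RG hR ζ

/-- If `g` and the loss (in its second argument) are differentiable and
`θ` is a stationary point of the empirical risk of the original network, then the point
`θ̂ = B_{ζ0}(θ, R, Γ)` obtained by composing `β` embeddings with zero outgoing weights
(adding `K_{r_i}` neurons to the pairwise distinct hidden layers `r_i ∈ {1, …, L-1}`) is
a stationary point of the empirical risk of the enlarged network. -/
theorem multiBeta_zero_is_critical
    (g : ℝ → ℝ) (H : ℕ → ℕ) (L P : ℕ) (X Y : ℕ → ℕ → ℝ)
    (loss : (ℕ → ℝ) → (Fin (H L) → ℝ) → ℝ)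
    (hg : Differentiable ℝ g)
    (hloss : ∀ y : ℕ → ℝ,
      Differentiable ℝ (fun z : EuclideanSpace ℝ (Fin (H L)) => loss y z))
    (RG : List (ℕ × ℕ)) (hnd : (RG.map Prod.fst).Nodup)
    (hR : ∀ p ∈ RG, 1 ≤ p.1 ∧ p.1 + 1 ≤ L)
    (ζ : ℕ → ℕ → ℝ) (θ : NNParams)
    (hθ : IsCritical g H L P X Y loss θ)
    (θhat : NNParams) (hemb : θhat = multiBeta g ζ (fun _ _ _ => 0) H RG θ) :
    IsCritical g (multiEnlargeH H RG) L P X Y loss θhat :=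
  multiBeta_zero_is_critical_general g H L P X Y loss RG hR ζ θ hθ θhat hemb
end

section
/- Let the activation function g and the loss ℒ (in its second argument) be differentiable, and let θ satisfy ∇_θ R_emp(θ) = 0. Let R = {r_1,…,r_t} ⊆ {1,…,L−1}, Γ = {K_{r_1},…,K_{r_t}}, and let θ̂ = G_λ(θ, R, Γ) be the composition of γ embeddings adding K_{r_i} neurons to layer r_i for i = 1,…,t, each with its own duplicated unit and coefficients λ summing to one. Then θ̂ is a stationary point of the empirical risk of the enlarged network: ∇_{θ̂} R̂_emp(θ̂) = 0. -/
lemma NNParams.ext' {a b : NNParams} (hw : a.w = b.w) (hb : a.b = b.b) : a = b := by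
  cases a; cases b; cases hw; cases hb; rfl

lemma layerOut_congr (g : ℝ → ℝ) (H₂ H₁ : ℕ → ℕ) (θ₂ θ₁ : NNParams) (x : ℕ → ℝ) :
    ∀ n, (∀ ℓ', ℓ' < n → H₂ ℓ' = H₁ ℓ') →
    (∀ ℓ' j i, 1 ≤ ℓ' → ℓ' ≤ n → θ₂.w ℓ' j i = θ₁.w ℓ' j i) →
    (∀ ℓ' j, 1 ≤ ℓ' → ℓ' ≤ n → θ₂.b ℓ' j = θ₁.b ℓ' j) →
    ∀ i, layerOut g H₂ θ₂ x n i = layerOut g H₁ θ₁ x n i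
  | 0, _, _, _, _ => rfl
  | n+1, hH, hW, hB, i => by
      simp only [layerOut]
      congr 1
      rw [hH n (by omega)]
      refine congrArg₂ _ (Finset.sum_congr rfl fun j _ => ?_) (hB (n+1) i (by omega) le_rfl)
      rw [hW (n+1) i j (by omega) le_rfl,
        layerOut_congr g H₂ H₁ θ₂ θ₁ x n (fun ℓ' h => hH ℓ' (by omega))
          (fun ℓ' j i h1 h2 => hW ℓ' j i h1 (by omega))
          (fun ℓ' j h1 h2 => hB ℓ' j h1 (by omega)) j]

noncomputable def up (g : ℝ → ℝ) (H : ℕ → ℕ) (θ : NNParams) (l : ℕ) (v : ℕ → ℝ) :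
    ℕ → ℕ → ℝ
  | 0, i => v i
  | d+1, i =>
      g (∑ j ∈ Finset.range (H (l+d)), θ.w (l+d+1) i j * up g H θ l v d j + θ.b (l+d+1) i)

lemma layerOut_up (g : ℝ → ℝ) (H : ℕ → ℕ) (θ : NNParams) (x : ℕ → ℝ) (l : ℕ) :
    ∀ d i, layerOut g H θ x (l + d) i
      = up g H θ l (fun j => layerOut g H θ x l j) d i
  | 0, _ => rfl
  | d+1, i => by
      show layerOut g H θ x (l + d + 1) i = _
      simp only [layerOut, up]
      congr 1
      refine congrArg₂ _ (Finset.sum_congr rfl fun j _ => ?_) rfl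
      rw [layerOut_up g H θ x l d j]

lemma up_congr (g : ℝ → ℝ) (H₂ H₁ : ℕ → ℕ) (θ₂ θ₁ : NNParams) (l : ℕ) (v : ℕ → ℝ)
    (hH : ∀ ℓ', l ≤ ℓ' → H₂ ℓ' = H₁ ℓ')
    (hW : ∀ ℓ' j i, l + 1 ≤ ℓ' → θ₂.w ℓ' j i = θ₁.w ℓ' j i)
    (hB : ∀ ℓ' j, l + 1 ≤ ℓ' → θ₂.b ℓ' j = θ₁.b ℓ' j) :
    ∀ d i, up g H₂ θ₂ l v d i = up g H₁ θ₁ l v d i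
  | 0, _ => rfl
  | d+1, i => by
      simp only [up]
      congr 1
      rw [hH (l+d) (by omega)]
      refine congrArg₂ _ (Finset.sum_congr rfl fun j _ => ?_) (hB (l+d+1) i (by omega))
      rw [hW (l+d+1) i j (by omega), up_congr g H₂ H₁ θ₂ θ₁ l v hH hW hB d j]

lemma layerOut_row (g : ℝ → ℝ) (H₂ H : ℕ → ℕ) (θ₂ θ₁ : NNParams) (x : ℕ → ℝ)
    (lm j jsrc : ℕ)
    (hH : ∀ ℓ', ℓ' ≤ lm → H₂ ℓ' = H ℓ')
    (hlw : ∀ ℓ' j i, 1 ≤ ℓ' → ℓ' ≤ lm → θ₂.w ℓ' j i = θ₁.w ℓ' j i)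
    (hlb : ∀ ℓ' j, 1 ≤ ℓ' → ℓ' ≤ lm → θ₂.b ℓ' j = θ₁.b ℓ' j)
    (hrow : ∀ i, i < H lm → θ₂.w (lm+1) j i = θ₁.w (lm+1) jsrc i)
    (hbias : θ₂.b (lm+1) j = θ₁.b (lm+1) jsrc) :
    layerOut g H₂ θ₂ x (lm+1) j = layerOut g H θ₁ x (lm+1) jsrc := by
  simp only [layerOut]
  congr 1
  rw [hH lm le_rfl]
  refine congrArg₂ _ (Finset.sum_congr rfl fun i hi => ?_) hbias
  rw [hrow i (Finset.mem_range.mp hi),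
    layerOut_congr g H₂ H θ₂ θ₁ x lm (fun ℓ' h => hH ℓ' (by omega)) hlw hlb i]

lemma main_preact (g : ℝ → ℝ) (H : ℕ → ℕ) (θ₁ : NNParams) (x : ℕ → ℝ) (l h : ℕ) (q : ℝ)
    (H₂ : ℕ → ℕ) (θ₂ : NNParams)
    (hH : ∀ ℓ, l + 1 ≤ ℓ → H₂ ℓ = H ℓ)
    (hW : ∀ ℓ j i, l + 2 ≤ ℓ → θ₂.w ℓ j i = θ₁.w ℓ j i)
    (hB : ∀ ℓ j, l + 1 ≤ ℓ → θ₂.b ℓ j = θ₁.b ℓ j)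
    (hSum : ∀ j, ∑ i ∈ Finset.range (H₂ l), θ₂.w (l+1) j i * layerOut g H₂ θ₂ x l i
        = ∑ i ∈ Finset.range (H l), θ₁.w (l+1) j i *
            Function.update (fun i => layerOut g H θ₁ x l i) h q i) (d : ℕ) :
    ∀ r, preact g H₂ θ₂ x (l + d + 1) r
      = ∑ i ∈ Finset.range (H (l + d)), θ₁.w (l + d + 1) r i *
          up g H θ₁ l (Function.update (fun i => layerOut g H θ₁ x l i) h q) d i
        + θ₁.b (l + d + 1) r := by
  set v := Function.update (fun i => layerOut g H θ₁ x l i) h q with hv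
  have step1 : ∀ d i, layerOut g H₂ θ₂ x (l + d + 1) i = up g H θ₁ l v (d+1) i := by
    intro d
    induction d with
    | zero =>
      intro i
      show layerOut g H₂ θ₂ x (l + 1) i
        = g (∑ j ∈ Finset.range (H l), θ₁.w (l + 1) i j * v j + θ₁.b (l + 1) i)
      rw [layerOut]
      congr 1
      exact congrArg₂ _ (hSum i) (hB (l+1) i le_rfl)
    | succ d ih =>
      intro i
      show layerOut g H₂ θ₂ x ((l + d + 1) + 1) i
        = g (∑ j ∈ Finset.range (H (l + d + 1)),
            θ₁.w ((l + d + 1) + 1) i j * up g H θ₁ l v (d+1) j + θ₁.b ((l + d + 1) + 1) i)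
      rw [layerOut]
      congr 1
      rw [hH (l + d + 1) (by omega)]
      refine congrArg₂ _ (Finset.sum_congr rfl fun j _ => ?_) (hB _ i (by omega))
      rw [hW (l + d + 1 + 1) i j (by omega), ih j]
  intro r
  match d with
  | 0 =>
    simp only [preact, Nat.add_zero, Nat.add_sub_cancel, up]
    exact congrArg₂ _ (hSum r) (hB (l+1) r le_rfl)
  | d + 1 =>
    have h1 : (l + (d + 1) + 1) - 1 = l + d + 1 := by omega
    show preact g H₂ θ₂ x ((l + d + 1) + 1) r
      = ∑ i ∈ Finset.range (H (l + d + 1)),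
          θ₁.w ((l + d + 1) + 1) r i * up g H θ₁ l v (d+1) i + θ₁.b ((l + d + 1) + 1) r
    simp only [preact, Nat.add_sub_cancel]
    rw [hH (l + d + 1) (by omega)]
    refine congrArg₂ _ (Finset.sum_congr rfl fun i _ => ?_) (hB _ r (by omega))
    rw [hW (l + d + 1 + 1) r i (by omega), step1 d i]

lemma preact_up (g : ℝ → ℝ) (H : ℕ → ℕ) (θ : NNParams) (x : ℕ → ℝ) (l d r : ℕ) :
    preact g H θ x (l + d + 1) r
      = ∑ i ∈ Finset.range (H (l + d)), θ.w (l + d + 1) r i *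
          up g H θ l (fun j => layerOut g H θ x l j) d i + θ.b (l + d + 1) r := by
  simp only [preact, Nat.add_sub_cancel]
  refine congrArg₂ _ (Finset.sum_congr rfl fun i _ => ?_) rfl
  rw [layerOut_up g H θ x l d i]

lemma group_alg (n K h : ℕ) (hh : h < n) (w W : ℕ → ℝ) (lam : ℕ → ℝ) (O V : ℕ → ℝ) (qv : ℝ)
    (hw : ∀ i, i < n → i ≠ h → w i = W i)
    (hwh : w h = lam 0 * W h)
    (hwk : ∀ k, k < K → w (n + k) = lam (k+1) * W h)
    (hOV : ∀ i, i < n → i ≠ h → O i = V i)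
    (hq : lam 0 * O h + ∑ k ∈ Finset.range K, lam (k+1) * O (n + k) = qv) :
    ∑ i ∈ Finset.range (n + K), w i * O i
      = ∑ i ∈ Finset.range n, W i * Function.update V h qv i := by
  have hmem : h ∈ Finset.range n := Finset.mem_range.mpr hh
  rw [Finset.sum_range_add, ← Finset.sum_erase_add _ _ hmem, ← Finset.sum_erase_add _ _ hmem]
  have e1 : ∑ i ∈ (Finset.range n).erase h, w i * O i
      = ∑ i ∈ (Finset.range n).erase h, W i * Function.update V h qv i := by
    refine Finset.sum_congr rfl fun i hi => ?_
    have h1 : i ≠ h := Finset.ne_of_mem_erase hi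
    have h2 : i < n := Finset.mem_range.mp (Finset.mem_of_mem_erase hi)
    rw [hw i h2 h1, hOV i h2 h1, Function.update_apply, if_neg h1]
  have e2 : ∑ k ∈ Finset.range K, w (n + k) * O (n + k)
      = W h * ∑ k ∈ Finset.range K, lam (k+1) * O (n + k) := by
    rw [Finset.mul_sum]
    refine Finset.sum_congr rfl fun k hk => ?_
    rw [hwk k (Finset.mem_range.mp hk)]; ring
  rw [e1, e2, hwh, Function.update_self, ← hq]
  ring

lemma Remp_congr (g : ℝ → ℝ) (H₂ H₁ : ℕ → ℕ) (L P : ℕ) {m : ℕ}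
    (X Y : ℕ → ℕ → ℝ) (loss : (ℕ → ℝ) → (Fin m → ℝ) → ℝ) (θ₂ θ₁ : NNParams)
    (hpre : ∀ p r, p < P → preact g H₂ θ₂ (X p) L r = preact g H₁ θ₁ (X p) L r) :
    Remp g H₂ L P X Y loss θ₂ = Remp g H₁ L P X Y loss θ₁ := by
  simp only [Remp]
  refine congrArg _ (Finset.sum_congr rfl fun p hp => ?_)
  exact congrArg _ (funext fun r => hpre p r (Finset.mem_range.mp hp))

lemma enlargeH_ne (H : ℕ → ℕ) (l K : ℕ) {ℓ : ℕ} (h : ℓ ≠ l) : enlargeH H l K ℓ = H ℓ :=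
  if_neg h

section Invariance

variable (g : ℝ → ℝ) (H : ℕ → ℕ) (l K h : ℕ) (lam : ℕ → ℝ)

/-- lower layers of a `gammaEmb` agree with the base parameters -/

lemma gammaEmb_low_w (θ : NNParams) (ℓ j i : ℕ) (h1 : ℓ ≠ l) (h2 : ℓ ≠ l + 1) :
    (gammaEmb H l K h lam θ).w ℓ j i = θ.w ℓ j i := by
  simp only [gammaEmb]
  rw [if_neg (by tauto), if_neg (by tauto), if_neg (by tauto)]

lemma gammaEmb_b_ne (θ : NNParams) (ℓ j : ℕ) (h1 : ¬(ℓ = l ∧ H l ≤ j)) :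
    (gammaEmb H l K h lam θ).b ℓ j = θ.b ℓ j := if_neg h1

/-- layer-`l` rows of a `gammaEmb`: old rows -/

lemma gammaEmb_row_old (θ : NNParams) (j i : ℕ) (hj : j < H l) (hlne : l ≠ l + 1) :
    (gammaEmb H l K h lam θ).w l j i = θ.w l j i := by
  simp only [gammaEmb]
  rw [if_neg (by omega), if_neg (by tauto), if_neg (by tauto)]

/-- layer-`l` rows of a `gammaEmb`: new rows -/

lemma gammaEmb_row_new (θ : NNParams) (j i : ℕ) (hj : H l ≤ j) :
    (gammaEmb H l K h lam θ).w l j i = θ.w l h i := by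
  simp only [gammaEmb]
  rw [if_pos ⟨by trivial, hj⟩]

end Invariance

section OutRows

variable (g : ℝ → ℝ) (H : ℕ → ℕ) (l K h : ℕ) (lam : ℕ → ℝ)

lemma gammaEmb_out_old (θ : NNParams) (j i : ℕ) (hi : i < H l) (hih : i ≠ h) :
    (gammaEmb H l K h lam θ).w (l+1) j i = θ.w (l+1) j i := by
  simp only [gammaEmb]
  rw [if_neg (by omega), if_neg (by tauto), if_neg (by omega)]

lemma gammaEmb_out_h (θ : NNParams) (j : ℕ) :
    (gammaEmb H l K h lam θ).w (l+1) j h = lam 0 * θ.w (l+1) j h := by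
  simp only [gammaEmb]
  rw [if_neg (by omega), if_pos (by simp)]

lemma gammaEmb_out_new (θ : NNParams) (j k : ℕ) (hh : h < H l) :
    (gammaEmb H l K h lam θ).w (l+1) j (H l + k) = lam (k+1) * θ.w (l+1) j h := by
  simp only [gammaEmb]
  rw [if_neg (by omega), if_neg (by omega), if_pos ⟨by trivial, by omega⟩,
    Nat.add_sub_cancel_left]

/-- output of a unit of layer `l = lm+1` of an enlarged network, given its row agrees
with a row of a reference network -/

lemma out_at_l (lm : ℕ) (θref θ₂ : NNParams) (x : ℕ → ℝ) (j jsrc : ℕ)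
    (hlow_w : ∀ ℓ' j i, 1 ≤ ℓ' → ℓ' ≤ lm → θ₂.w ℓ' j i = θref.w ℓ' j i)
    (hlow_b : ∀ ℓ' j, 1 ≤ ℓ' → ℓ' ≤ lm → θ₂.b ℓ' j = θref.b ℓ' j)
    (hrow : ∀ i, i < H lm → θ₂.w (lm+1) j i = θref.w (lm+1) jsrc i)
    (hbias : θ₂.b (lm+1) j = θref.b (lm+1) jsrc) :
    layerOut g (enlargeH H (lm+1) K) θ₂ x (lm+1) j = layerOut g H θref x (lm+1) jsrc :=
  layerOut_row g (enlargeH H (lm+1) K) H θ₂ θref x lm j jsrc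
    (fun ℓ' hle => enlargeH_ne H (lm+1) K (by omega)) hlow_w hlow_b hrow hbias

end OutRows

lemma gammaEmb_b_new (H : ℕ → ℕ) (l K h : ℕ) (lam : ℕ → ℝ) (θ : NNParams) (j : ℕ)
    (hj : H l ≤ j) : (gammaEmb H l K h lam θ).b l j = θ.b l h := by
  simp only [gammaEmb]
  rw [if_pos ⟨by trivial, hj⟩]

section Inv

variable (g : ℝ → ℝ) (H : ℕ → ℕ) (L : ℕ) (lm K h : ℕ) (lam : ℕ → ℝ)

lemma gammaEmb_preact (hlL : lm + 1 + 1 ≤ L) (hh : h < H (lm+1))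
    (hsum : ∑ i ∈ Finset.range (K+1), lam i = 1) (θ : NNParams) (x : ℕ → ℝ) (r : ℕ) :
    preact g (enlargeH H (lm+1) K) (gammaEmb H (lm+1) K h lam θ) x L r
      = preact g H θ x L r := by
  set l := lm + 1 with hldef
  obtain ⟨d, rfl⟩ : ∃ d, L = l + d + 1 := ⟨L - l - 1, by omega⟩
  set θ' := gammaEmb H l K h lam θ with hθ'
  have hlow_w : ∀ ℓ' j i, 1 ≤ ℓ' → ℓ' ≤ lm → θ'.w ℓ' j i = θ.w ℓ' j i :=
    fun ℓ' j i h1 h2 => gammaEmb_low_w H l K h lam θ ℓ' j i (by omega) (by omega)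
  have hlow_b : ∀ ℓ' j, 1 ≤ ℓ' → ℓ' ≤ lm → θ'.b ℓ' j = θ.b ℓ' j :=
    fun ℓ' j h1 h2 => gammaEmb_b_ne H l K h lam θ ℓ' j (by omega)
  have hout_old : ∀ i, i < H l →
      layerOut g (enlargeH H l K) θ' x l i = layerOut g H θ x l i :=
    fun i hi => out_at_l g H K lm θ θ' x i i hlow_w hlow_b
      (fun i' _ => gammaEmb_row_old H l K h lam θ i i' hi (by omega))
      (gammaEmb_b_ne H l K h lam θ l i (by omega))
  have hout_new : ∀ i, H l ≤ i →
      layerOut g (enlargeH H l K) θ' x l i = layerOut g H θ x l h :=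
    fun i hi => out_at_l g H K lm θ θ' x i h hlow_w hlow_b
      (fun i' _ => gammaEmb_row_new H l K h lam θ i i' hi)
      (gammaEmb_b_new H l K h lam θ i hi)
  have hSum : ∀ j, ∑ i ∈ Finset.range (enlargeH H l K l),
        θ'.w (l+1) j i * layerOut g (enlargeH H l K) θ' x l i
      = ∑ i ∈ Finset.range (H l), θ.w (l+1) j i *
          Function.update (fun i => layerOut g H θ x l i) h (layerOut g H θ x l h) i := by
    intro j
    rw [show enlargeH H l K l = H l + K from if_pos rfl]
    refine group_alg (H l) K h hh _ _ lam _ _ _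
      (fun i hi hih => gammaEmb_out_old H l K h lam θ j i hi hih)
      (gammaEmb_out_h H l K h lam θ j)
      (fun k hk => gammaEmb_out_new H l K h lam θ j k hh)
      (fun i hi _ => hout_old i hi) ?_
    rw [hout_old h hh]
    have e3 : ∀ k ∈ Finset.range K,
        lam (k+1) * layerOut g (enlargeH H l K) θ' x l (H l + k)
          = lam (k+1) * layerOut g H θ x l h :=
      fun k _ => by rw [hout_new (H l + k) (by omega)]
    rw [Finset.sum_congr rfl e3, ← Finset.sum_mul]
    have hs : (∑ k ∈ Finset.range K, lam (k+1)) + lam 0 = 1 := by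
      rw [← Finset.sum_range_succ' lam K]; exact hsum
    linear_combination layerOut g H θ x l h * hs
  rw [main_preact g H θ x l h (layerOut g H θ x l h) (enlargeH H l K) θ'
      (fun ℓ hle => enlargeH_ne H l K (by omega))
      (fun ℓ j i hle => gammaEmb_low_w H l K h lam θ ℓ j i (by omega) (by omega))
      (fun ℓ j hle => gammaEmb_b_ne H l K h lam θ ℓ j (by omega)) hSum d r]
  have hupd : Function.update (fun i => layerOut g H θ x l i) h (layerOut g H θ x l h)
      = (fun j => layerOut g H θ x l j) := Function.update_eq_self _ _
  rw [hupd, ← preact_up]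

lemma gammaEmb_Remp (P : ℕ) {m : ℕ} (X Y : ℕ → ℕ → ℝ)
    (loss : (ℕ → ℝ) → (Fin m → ℝ) → ℝ)
    (hlL : lm + 1 + 1 ≤ L) (hh : h < H (lm+1))
    (hsum : ∑ i ∈ Finset.range (K+1), lam i = 1) (θ : NNParams) :
    Remp g (enlargeH H (lm+1) K) L P X Y loss (gammaEmb H (lm+1) K h lam θ)
      = Remp g H L P X Y loss θ :=
  Remp_congr g (enlargeH H (lm+1) K) H L P X Y loss _ θ
    (fun p r _ => gammaEmb_preact g H L lm K h lam hlL hh hsum θ (X p) r)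

end Inv

section Hard

variable (g : ℝ → ℝ) (H : ℕ → ℕ) (L P : ℕ) {m : ℕ} (X Y : ℕ → ℕ → ℝ)
  (loss : (ℕ → ℝ) → (Fin m → ℝ) → ℝ)

lemma hard_case
    (hg : Differentiable ℝ g)
    (hloss : ∀ y, Differentiable ℝ (fun z : EuclideanSpace ℝ (Fin m) => loss y z))
    (lm K h : ℕ) (lam : ℕ → ℝ)
    (hlL : lm + 1 + 1 ≤ L) (hh : h < H (lm+1))
    (hsum : ∑ i ∈ Finset.range (K+1), lam i = 1)
    (θ : NNParams) (c' : ℕ) (lc : ℝ)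
    (hc' : (c' = h ∧ lc = lam 0) ∨ (∃ k, k < K ∧ c' = H (lm+1) + k ∧ lc = lam (k+1)))
    (Θ Θ' : ℝ → NNParams) (t₀ : ℝ) (η : ℕ → ℝ → ℝ) (e : ℕ → ℝ)
    (hη : ∀ p, HasDerivAt (η p) (e p) t₀)
    (hΘ0 : Θ t₀ = θ)
    (hΘw : ∀ t ℓ j i, ¬(ℓ = lm + 1 ∧ j = h) → (Θ t).w ℓ j i = θ.w ℓ j i)
    (hΘb : ∀ t ℓ j, ¬(ℓ = lm + 1 ∧ j = h) → (Θ t).b ℓ j = θ.b ℓ j)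
    (hΘout : ∀ t p, layerOut g H (Θ t) (X p) (lm+1) h = η p t)
    (hΘ'w : ∀ t ℓ j i, ¬(ℓ = lm + 1 ∧ j = c') →
        (Θ' t).w ℓ j i = (gammaEmb H (lm+1) K h lam θ).w ℓ j i)
    (hΘ'b : ∀ t ℓ j, ¬(ℓ = lm + 1 ∧ j = c') →
        (Θ' t).b ℓ j = (gammaEmb H (lm+1) K h lam θ).b ℓ j)
    (hΘ'out : ∀ t p, layerOut g (enlargeH H (lm+1) K) (Θ' t) (X p) (lm+1) c' = η p t)
    (hcrit : deriv (fun t => Remp g H L P X Y loss (Θ t)) t₀ = 0) :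
    deriv (fun t => Remp g (enlargeH H (lm+1) K) L P X Y loss (Θ' t)) t₀ = 0 := by
  set l := lm + 1 with hldef
  obtain ⟨d, hL⟩ : ∃ d, L = l + d + 1 := ⟨L - l - 1, by omega⟩
  set θ' := gammaEmb H l K h lam θ with hθ'
  have hc'h : c' = h ∨ H l ≤ c' := by
    rcases hc' with ⟨h1, _⟩ | ⟨k, _, h1, _⟩
    · exact Or.inl h1
    · exact Or.inr (by omega)
  have hηt₀ : ∀ p, η p t₀ = layerOut g H θ (X p) l h := fun p => by
    rw [← hΘout t₀ p, hΘ0]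
  set F : ℕ → ℝ → ℝ := fun p u => loss (Y p)
    (fun r : Fin m => ∑ i ∈ Finset.range (H (l + d)), θ.w (l + d + 1) (r : ℕ) i *
        up g H θ l (Function.update (fun i => layerOut g H θ (X p) l i) h u) d i
      + θ.b (l + d + 1) (r : ℕ)) with hF
  -- layer-l outputs of the family Θ t
  have hΘlow_w : ∀ t, ∀ ℓ' j i, 1 ≤ ℓ' → ℓ' ≤ lm → (Θ t).w ℓ' j i = θ.w ℓ' j i :=
    fun t ℓ' j i h1 h2 => hΘw t ℓ' j i (by omega)
  have hΘlow_b : ∀ t, ∀ ℓ' j, 1 ≤ ℓ' → ℓ' ≤ lm → (Θ t).b ℓ' j = θ.b ℓ' j :=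
    fun t ℓ' j h1 h2 => hΘb t ℓ' j (by omega)
  have houtΘ : ∀ t p i, i ≠ h →
      layerOut g H (Θ t) (X p) l i = layerOut g H θ (X p) l i := by
    intro t p i hih
    exact layerOut_row g H H (Θ t) θ (X p) lm i i (fun _ _ => rfl)
      (hΘlow_w t) (hΘlow_b t)
      (fun i' _ => hΘw t l i i' (by tauto))
      (hΘb t l i (by tauto))
  -- layer-l outputs of the family Θ' t
  have hΘ'low_w : ∀ t, ∀ ℓ' j i, 1 ≤ ℓ' → ℓ' ≤ lm → (Θ' t).w ℓ' j i = θ.w ℓ' j i :=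
    fun t ℓ' j i h1 h2 => by
      rw [hΘ'w t ℓ' j i (by omega), gammaEmb_low_w H l K h lam θ ℓ' j i (by omega) (by omega)]
  have hΘ'low_b : ∀ t, ∀ ℓ' j, 1 ≤ ℓ' → ℓ' ≤ lm → (Θ' t).b ℓ' j = θ.b ℓ' j :=
    fun t ℓ' j h1 h2 => by
      rw [hΘ'b t ℓ' j (by omega), gammaEmb_b_ne H l K h lam θ ℓ' j (by omega)]
  have houtΘ'old : ∀ t p i, i < H l → i ≠ h →
      layerOut g (enlargeH H l K) (Θ' t) (X p) l i = layerOut g H θ (X p) l i := by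
    intro t p i hi hih
    have hic : i ≠ c' := by rcases hc'h with h1 | h1 <;> omega
    refine out_at_l g H K lm θ (Θ' t) (X p) i i (hΘ'low_w t) (hΘ'low_b t)
      (fun i' _ => ?_) ?_
    · rw [hΘ'w t l i i' (by tauto), gammaEmb_row_old H l K h lam θ i i' hi (by omega)]
    · rw [hΘ'b t l i (by tauto), gammaEmb_b_ne H l K h lam θ l i (by omega)]
  have houtΘ'grp : ∀ t p s, (s = h ∨ H l ≤ s) → s ≠ c' →
      layerOut g (enlargeH H l K) (Θ' t) (X p) l s = layerOut g H θ (X p) l h := by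
    intro t p s hs hsc
    refine out_at_l g H K lm θ (Θ' t) (X p) s h (hΘ'low_w t) (hΘ'low_b t)
      (fun i' _ => ?_) ?_
    · rw [hΘ'w t l s i' (by tauto)]
      rcases hs with hs | hs
      · rw [hs]; exact gammaEmb_row_old H l K h lam θ h i' hh (by omega)
      · exact gammaEmb_row_new H l K h lam θ s i' hs
    · rw [hΘ'b t l s (by tauto)]
      rcases hs with hs | hs
      · rw [hs]; exact gammaEmb_b_ne H l K h lam θ l h (by omega)
      · exact gammaEmb_b_new H l K h lam θ s hs
  -- Step Ψ
  have StepΨ : ∀ t, Remp g H L P X Y loss (Θ t)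
      = 1 / (P:ℝ) * ∑ p ∈ Finset.range P, F p (η p t) := by
    intro t
    simp only [Remp, hF]
    refine congrArg _ (Finset.sum_congr rfl fun p hp => congrArg _ (funext fun r => ?_))
    rw [hL]
    refine main_preact g H θ (X p) l h (η p t) H (Θ t)
      (fun ℓ _ => rfl)
      (fun ℓ j i hle => hΘw t ℓ j i (by omega))
      (fun ℓ j hle => hΘb t ℓ j (by omega)) ?_ d r
    intro j
    refine Finset.sum_congr rfl fun i hi => ?_
    rw [hΘw t (l+1) j i (by omega)]
    by_cases hih : i = h
    · subst hih
      rw [hΘout t p, Function.update_self]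
    · rw [houtΘ t p i hih, Function.update_apply, if_neg hih]
  -- Step Φ
  have StepΦ : ∀ t, Remp g (enlargeH H l K) L P X Y loss (Θ' t)
      = 1 / (P:ℝ) * ∑ p ∈ Finset.range P,
          F p (lc * η p t + (1 - lc) * η p t₀) := by
    intro t
    simp only [Remp, hF]
    refine congrArg _ (Finset.sum_congr rfl fun p hp => congrArg _ (funext fun r => ?_))
    rw [hL]
    refine main_preact g H θ (X p) l h (lc * η p t + (1 - lc) * η p t₀)
      (enlargeH H l K) (Θ' t)
      (fun ℓ hle => enlargeH_ne H l K (by omega))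
      (fun ℓ j i hle => by
        rw [hΘ'w t ℓ j i (by omega),
          gammaEmb_low_w H l K h lam θ ℓ j i (by omega) (by omega)])
      (fun ℓ j hle => by
        rw [hΘ'b t ℓ j (by omega), gammaEmb_b_ne H l K h lam θ ℓ j (by omega)]) ?_ d r
    intro j
    rw [show enlargeH H l K l = H l + K from if_pos rfl]
    refine group_alg (H l) K h hh _ _ lam _ _ _
      (fun i hi hih => by
        rw [hΘ'w t (l+1) j i (by omega), gammaEmb_out_old H l K h lam θ j i hi hih])
      (by rw [hΘ'w t (l+1) j h (by omega)]; exact gammaEmb_out_h H l K h lam θ j)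
      (fun k hk => by
        rw [hΘ'w t (l+1) j (H l + k) (by omega)]
        exact gammaEmb_out_new H l K h lam θ j k hh)
      (fun i hi hih => houtΘ'old t p i hi hih) ?_
    -- the coefficient identity
    rcases hc' with ⟨rfl, rfl⟩ | ⟨k₀, hk₀, rfl, rfl⟩
    · -- c' = h
      rw [hΘ'out t p]
      have e3 : ∀ k ∈ Finset.range K,
          lam (k+1) * layerOut g (enlargeH H l K) (Θ' t) (X p) l (H l + k)
            = lam (k+1) * η p t₀ := by
        intro k _
        rw [houtΘ'grp t p (H l + k) (Or.inr (by omega)) (by omega), ← hηt₀ p]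
      rw [Finset.sum_congr rfl e3, ← Finset.sum_mul]
      have hs : (∑ k ∈ Finset.range K, lam (k+1)) + lam 0 = 1 := by
        rw [← Finset.sum_range_succ' lam K]; exact hsum
      linear_combination (η p t₀) * hs
    · -- c' = H l + k₀
      have hOh : layerOut g (enlargeH H l K) (Θ' t) (X p) l h = η p t₀ := by
        rw [houtΘ'grp t p h (Or.inl rfl) (by omega), ← hηt₀ p]
      have hmem : k₀ ∈ Finset.range K := Finset.mem_range.mpr hk₀
      rw [hOh, ← Finset.sum_erase_add _ _ hmem, hΘ'out t p]
      have e3 : ∀ k ∈ (Finset.range K).erase k₀,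
          lam (k+1) * layerOut g (enlargeH H l K) (Θ' t) (X p) l (H l + k)
            = lam (k+1) * η p t₀ := by
        intro k hk
        have : k ≠ k₀ := Finset.ne_of_mem_erase hk
        rw [houtΘ'grp t p (H l + k) (Or.inr (by omega)) (by omega), ← hηt₀ p]
      rw [Finset.sum_congr rfl e3, ← Finset.sum_mul]
      have hs : (∑ k ∈ Finset.range K, lam (k+1)) + lam 0 = 1 := by
        rw [← Finset.sum_range_succ' lam K]; exact hsum
      have hs2 : (∑ k ∈ (Finset.range K).erase k₀, lam (k+1)) + lam (k₀+1)
          = ∑ k ∈ Finset.range K, lam (k+1) := Finset.sum_erase_add _ _ hmem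
      linear_combination (η p t₀) * hs + (η p t₀) * hs2
  -- differentiability of F
  have hFdiff : ∀ p, Differentiable ℝ (F p) := by
    intro p
    have hup : ∀ d' i, Differentiable ℝ (fun u => up g H θ l
        (Function.update (fun i => layerOut g H θ (X p) l i) h u) d' i) := by
      intro d'
      induction d' with
      | zero =>
        intro i
        simp only [up, Function.update_apply]
        by_cases hih : i = h
        · simpa [hih] using differentiable_id
        · simpa [hih] using (differentiable_const (layerOut g H θ (X p) l i))
      | succ d' ih =>
        intro i
        simp only [up]
        refine hg.comp ?_
        exact (Differentiable.fun_sum fun j _ => (ih j).const_mul _).add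
          (differentiable_const _)
    rw [hF]
    have hcoord : ∀ r : Fin m, Differentiable ℝ (fun u =>
        ∑ i ∈ Finset.range (H (l + d)), θ.w (l + d + 1) (r : ℕ) i *
            up g H θ l (Function.update (fun i => layerOut g H θ (X p) l i) h u) d i
          + θ.b (l + d + 1) (r : ℕ)) := fun r =>
      (Differentiable.fun_sum fun i _ => (hup d i).const_mul _).add (differentiable_const _)
    have hZ : Differentiable ℝ (fun u =>
        ((PiLp.continuousLinearEquiv 2 ℝ (fun _ : Fin m => ℝ)).symm
          (fun r : Fin m => ∑ i ∈ Finset.range (H (l + d)), θ.w (l + d + 1) (r : ℕ) i *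
              up g H θ l (Function.update (fun i => layerOut g H θ (X p) l i) h u) d i
            + θ.b (l + d + 1) (r : ℕ)))) :=
      (PiLp.continuousLinearEquiv 2 ℝ (fun _ : Fin m => ℝ)).symm.differentiable.comp
        (differentiable_pi.mpr hcoord)
    exact (hloss (Y p)).comp hZ
  -- derivatives
  set S := ∑ p ∈ Finset.range P, deriv (F p) (η p t₀) * e p with hS
  have hΨ : HasDerivAt (fun t => Remp g H L P X Y loss (Θ t)) (1/(P:ℝ) * S) t₀ := by
    have heq : (fun t => Remp g H L P X Y loss (Θ t))
        = fun t => 1/(P:ℝ) * ∑ p ∈ Finset.range P, F p (η p t) := funext StepΨ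
    rw [heq, hS]
    exact HasDerivAt.const_mul _ (HasDerivAt.fun_sum fun p _ =>
      ((hFdiff p (η p t₀)).hasDerivAt).comp t₀ (hη p))
  have hSzero : 1/(P:ℝ) * S = 0 := by rw [← hΨ.deriv]; exact hcrit
  have hΦ : HasDerivAt (fun t => Remp g (enlargeH H l K) L P X Y loss (Θ' t))
      (1/(P:ℝ) * ∑ p ∈ Finset.range P, deriv (F p) (η p t₀) * (lc * e p)) t₀ := by
    have heq : (fun t => Remp g (enlargeH H l K) L P X Y loss (Θ' t))
        = fun t => 1/(P:ℝ) * ∑ p ∈ Finset.range P,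
            F p (lc * η p t + (1 - lc) * η p t₀) := funext StepΦ
    rw [heq]
    refine HasDerivAt.const_mul _ (HasDerivAt.fun_sum fun p _ => ?_)
    have hlin : HasDerivAt (fun t => lc * η p t + (1 - lc) * η p t₀) (lc * e p) t₀ :=
      ((hη p).const_mul lc).add_const _
    have hval : lc * η p t₀ + (1 - lc) * η p t₀ = η p t₀ := by ring
    have hFd : HasDerivAt (F p) (deriv (F p) (η p t₀))
        (lc * η p t₀ + (1 - lc) * η p t₀) := by
      rw [hval]; exact (hFdiff p (η p t₀)).hasDerivAt
    exact hFd.comp t₀ hlin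
  rw [hΦ.deriv]
  have e4 : ∑ p ∈ Finset.range P, deriv (F p) (η p t₀) * (lc * e p) = lc * S := by
    rw [hS, Finset.mul_sum]
    exact Finset.sum_congr rfl fun p _ => by ring
  rw [e4]
  calc 1/(P:ℝ) * (lc * S) = lc * (1/(P:ℝ) * S) := by ring
  _ = 0 := by rw [hSzero]; ring

end Hard

lemma updW_self (θ : NNParams) (ℓ j i : ℕ) : updW θ ℓ j i (θ.w ℓ j i) = θ := by
  refine NNParams.ext' (funext fun ℓ' => funext fun j' => funext fun i' => ?_) rfl
  simp only [updW]
  split_ifs with hc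
  · obtain ⟨rfl, rfl, rfl⟩ := hc; rfl
  · rfl

lemma updB_self (θ : NNParams) (ℓ j : ℕ) : updB θ ℓ j (θ.b ℓ j) = θ := by
  refine NNParams.ext' rfl (funext fun ℓ' => funext fun j' => ?_)
  simp only [updB]
  split_ifs with hc
  · obtain ⟨rfl, rfl⟩ := hc; rfl
  · rfl

lemma gammaEmb_updW_comm (H : ℕ → ℕ) (l K h : ℕ) (lam : ℕ → ℝ) (θ : NNParams)
    (ℓ j i : ℕ) (t : ℝ) (hh : h < H l)
    (hcase : (ℓ ≠ l ∧ ℓ ≠ l + 1) ∨ (ℓ = l ∧ j < H l ∧ j ≠ h)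
      ∨ (ℓ = l + 1 ∧ i < H l ∧ i ≠ h)) :
    updW (gammaEmb H l K h lam θ) ℓ j i t = gammaEmb H l K h lam (updW θ ℓ j i t) := by
  refine NNParams.ext' (funext fun ℓ' => funext fun j' => funext fun i' => ?_)
    (funext fun ℓ' => funext fun j' => rfl)
  simp only [updW, gammaEmb]
  split_ifs <;> first | rfl | (exfalso; omega)

lemma gammaEmb_updB_comm (H : ℕ → ℕ) (l K h : ℕ) (lam : ℕ → ℝ) (θ : NNParams)
    (ℓ j : ℕ) (t : ℝ) (hh : h < H l)
    (hcase : ℓ ≠ l ∨ (ℓ = l ∧ j < H l ∧ j ≠ h)) :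
    updB (gammaEmb H l K h lam θ) ℓ j t = gammaEmb H l K h lam (updB θ ℓ j t) := by
  refine NNParams.ext' (funext fun ℓ' => funext fun j' => funext fun i' => rfl)
    (funext fun ℓ' => funext fun j' => ?_)
  simp only [updB, gammaEmb]
  split_ifs <;> first | rfl | (exfalso; omega)

lemma group_alg' (n K h : ℕ) (hh : h < n) (w W : ℕ → ℝ) (O V : ℕ → ℝ)
    (hw : ∀ i, i < n → i ≠ h → w i = W i)
    (hgrp : w h + ∑ k ∈ Finset.range K, w (n + k) = W h)
    (hOV : ∀ i, i < n → i ≠ h → O i = V i)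
    (hOh : O h = V h) (hOk : ∀ k, k < K → O (n+k) = V h) :
    ∑ i ∈ Finset.range (n + K), w i * O i = ∑ i ∈ Finset.range n, W i * V i := by
  have hmem : h ∈ Finset.range n := Finset.mem_range.mpr hh
  rw [Finset.sum_range_add, ← Finset.sum_erase_add _ _ hmem, ← Finset.sum_erase_add _ _ hmem]
  have e1 : ∑ i ∈ (Finset.range n).erase h, w i * O i
      = ∑ i ∈ (Finset.range n).erase h, W i * V i := by
    refine Finset.sum_congr rfl fun i hi => ?_
    have h1 : i ≠ h := Finset.ne_of_mem_erase hi
    have h2 : i < n := Finset.mem_range.mp (Finset.mem_of_mem_erase hi)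
    rw [hw i h2 h1, hOV i h2 h1]
  have e2 : ∑ k ∈ Finset.range K, w (n + k) * O (n + k)
      = (∑ k ∈ Finset.range K, w (n + k)) * V h := by
    rw [Finset.sum_mul]
    exact Finset.sum_congr rfl fun k hk => by rw [hOk k (Finset.mem_range.mp hk)]
  rw [e1, e2, hOh, ← hgrp]
  ring

lemma affine_case (g : ℝ → ℝ) (H : ℕ → ℕ) (L P : ℕ) {m : ℕ} (X Y : ℕ → ℕ → ℝ)
    (loss : (ℕ → ℝ) → (Fin m → ℝ) → ℝ)
    (lm K h : ℕ) (lam : ℕ → ℝ) (hlL : lm + 1 + 1 ≤ L) (hh : h < H (lm+1))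
    (hsum : ∑ i ∈ Finset.range (K+1), lam i = 1) (θ : NNParams)
    (j i : ℕ) (lc : ℝ)
    (hlc : (i = h ∧ lc = lam 0) ∨ (∃ k, k < K ∧ i = H (lm+1) + k ∧ lc = lam (k+1)))
    (t : ℝ) :
    Remp g (enlargeH H (lm+1) K) L P X Y loss
        (updW (gammaEmb H (lm+1) K h lam θ) (lm+1+1) j i t)
      = Remp g H L P X Y loss
        (updW θ (lm+1+1) j h (t + (1 - lc) * θ.w (lm+1+1) j h)) := by
  obtain ⟨d, rfl⟩ : ∃ d, L = (lm+1) + d + 1 := ⟨L - (lm+1) - 1, by omega⟩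
  have hs : (∑ k ∈ Finset.range K, lam (k+1)) + lam 0 = 1 := by
    rw [← Finset.sum_range_succ' lam K]; exact hsum
  refine Remp_congr g (enlargeH H (lm+1) K) H _ P X Y loss _ _ (fun p r _ => ?_)
  -- abbreviations
  have hlow_w : ∀ ℓ'' j'' i'', 1 ≤ ℓ'' → ℓ'' ≤ lm →
      (updW (gammaEmb H (lm+1) K h lam θ) (lm+1+1) j i t).w ℓ'' j'' i'' = θ.w ℓ'' j'' i'' :=
    fun ℓ'' j'' i'' hx1 hx2 => by
      simp only [updW]
      rw [if_neg (by omega), gammaEmb_low_w H (lm+1) K h lam θ ℓ'' j'' i'' (by omega) (by omega)]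
  have hlow_b : ∀ ℓ'' j'', 1 ≤ ℓ'' → ℓ'' ≤ lm →
      (updW (gammaEmb H (lm+1) K h lam θ) (lm+1+1) j i t).b ℓ'' j'' = θ.b ℓ'' j'' :=
    fun ℓ'' j'' hx1 hx2 => gammaEmb_b_ne H (lm+1) K h lam θ ℓ'' j'' (by omega)
  have hrow_l : ∀ s i'', (updW (gammaEmb H (lm+1) K h lam θ) (lm+1+1) j i t).w (lm+1) s i''
      = (gammaEmb H (lm+1) K h lam θ).w (lm+1) s i'' :=
    fun s i'' => by simp only [updW]; rw [if_neg (by omega)]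
  have hout_old : ∀ i', i' < H (lm+1) → i' ≠ h →
      layerOut g (enlargeH H (lm+1) K) (updW (gammaEmb H (lm+1) K h lam θ) (lm+1+1) j i t)
          (X p) (lm+1) i' = layerOut g H θ (X p) (lm+1) i' :=
    fun i' hi' hih => out_at_l g H K lm θ _ (X p) i' i' hlow_w hlow_b
      (fun i'' _ => by
        rw [hrow_l]; exact gammaEmb_row_old H (lm+1) K h lam θ i' i'' hi' (by omega))
      (gammaEmb_b_ne H (lm+1) K h lam θ (lm+1) i' (by omega))
  have hout_h : layerOut g (enlargeH H (lm+1) K)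
        (updW (gammaEmb H (lm+1) K h lam θ) (lm+1+1) j i t) (X p) (lm+1) h
      = layerOut g H θ (X p) (lm+1) h :=
    out_at_l g H K lm θ _ (X p) h h hlow_w hlow_b
      (fun i'' _ => by
        rw [hrow_l]; exact gammaEmb_row_old H (lm+1) K h lam θ h i'' hh (by omega))
      (gammaEmb_b_ne H (lm+1) K h lam θ (lm+1) h (by omega))
  have hout_new : ∀ k, layerOut g (enlargeH H (lm+1) K)
        (updW (gammaEmb H (lm+1) K h lam θ) (lm+1+1) j i t) (X p) (lm+1) (H (lm+1) + k)
      = layerOut g H θ (X p) (lm+1) h :=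
    fun k => out_at_l g H K lm θ _ (X p) (H (lm+1) + k) h hlow_w hlow_b
      (fun i'' _ => by
        rw [hrow_l]; exact gammaEmb_row_new H (lm+1) K h lam θ (H (lm+1) + k) i'' (by omega))
      (gammaEmb_b_new H (lm+1) K h lam θ (H (lm+1) + k) (by omega))
  have hV : ∀ i', layerOut g H (updW θ (lm+1+1) j h (t + (1 - lc) * θ.w (lm+1+1) j h))
        (X p) (lm+1) i' = layerOut g H θ (X p) (lm+1) i' :=
    layerOut_congr g H H _ θ (X p) (lm+1) (fun _ _ => rfl)
      (fun ℓ'' j'' i'' hx1 hx2 => by simp only [updW]; rw [if_neg (by omega)])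
      (fun _ _ _ _ => rfl)
  have hupd : Function.update (fun i' => layerOut g H
        (updW θ (lm+1+1) j h (t + (1 - lc) * θ.w (lm+1+1) j h)) (X p) (lm+1) i') h
        (layerOut g H (updW θ (lm+1+1) j h (t + (1 - lc) * θ.w (lm+1+1) j h)) (X p) (lm+1) h)
      = fun i' => layerOut g H (updW θ (lm+1+1) j h (t + (1 - lc) * θ.w (lm+1+1) j h))
          (X p) (lm+1) i' := Function.update_eq_self _ _
  rw [main_preact g H (updW θ (lm+1+1) j h (t + (1 - lc) * θ.w (lm+1+1) j h)) (X p) (lm+1) h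
      (layerOut g H (updW θ (lm+1+1) j h (t + (1 - lc) * θ.w (lm+1+1) j h)) (X p) (lm+1) h)
      (enlargeH H (lm+1) K) (updW (gammaEmb H (lm+1) K h lam θ) (lm+1+1) j i t)
      (fun ℓ hle => enlargeH_ne H (lm+1) K (by omega))
      (fun ℓ j'' i'' hle => by
        simp only [updW]
        rw [if_neg (by omega), if_neg (by omega),
          gammaEmb_low_w H (lm+1) K h lam θ ℓ j'' i'' (by omega) (by omega)])
      (fun ℓ j'' hle => gammaEmb_b_ne H (lm+1) K h lam θ ℓ j'' (by omega))
      ?_ d r, hupd, ← preact_up]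
  intro j''
  rw [show enlargeH H (lm+1) K (lm+1) = H (lm+1) + K from if_pos rfl, hupd]
  refine group_alg' (H (lm+1)) K h hh _ _ _ _ ?_ ?_ ?_ ?_ ?_
  · -- off-group weights agree
    intro s hs' hsh
    have hsi : s ≠ i := by
      rcases hlc with ⟨hih, _⟩ | ⟨k, _, hik, _⟩ <;> omega
    simp only [updW]
    rw [if_neg (by tauto), if_neg (by tauto),
      gammaEmb_out_old H (lm+1) K h lam θ j'' s hs' hsh]
  · -- group sum of outgoing weights
    by_cases hjj : j'' = j
    · subst hjj
      have hRHS : (updW θ (lm+1+1) j'' h (t + (1 - lc) * θ.w (lm+1+1) j'' h)).w (lm+1+1) j'' h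
          = t + (1 - lc) * θ.w (lm+1+1) j'' h := by
        simp only [updW]; rw [if_pos ⟨by trivial, by trivial, by trivial⟩]
      rw [hRHS]
      rcases hlc with ⟨hih, hlc0⟩ | ⟨k₀, hk₀, hik, hlck⟩
      · -- i = h : the perturbed slot is h itself
        have hLh : (updW (gammaEmb H (lm+1) K h lam θ) (lm+1+1) j'' i t).w (lm+1+1) j'' h
            = t := by
          simp only [updW]; rw [if_pos ⟨by trivial, by trivial, by omega⟩]
        have hLk : ∀ k ∈ Finset.range K,
            (updW (gammaEmb H (lm+1) K h lam θ) (lm+1+1) j'' i t).w (lm+1+1) j''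
              (H (lm+1) + k) = lam (k+1) * θ.w (lm+1+1) j'' h := by
          intro k _
          simp only [updW]
          rw [if_neg (by omega)]
          exact gammaEmb_out_new H (lm+1) K h lam θ j'' k hh
        rw [hLh, Finset.sum_congr rfl hLk, ← Finset.sum_mul, hlc0]
        linear_combination θ.w (lm+1+1) j'' h * hs
      · -- i = H (lm+1) + k₀
        have hLh : (updW (gammaEmb H (lm+1) K h lam θ) (lm+1+1) j'' i t).w (lm+1+1) j'' h
            = lam 0 * θ.w (lm+1+1) j'' h := by
          simp only [updW]
          rw [if_neg (by omega)]
          exact gammaEmb_out_h H (lm+1) K h lam θ j''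
        have hmem : k₀ ∈ Finset.range K := Finset.mem_range.mpr hk₀
        have hLk : ∀ k ∈ (Finset.range K).erase k₀,
            (updW (gammaEmb H (lm+1) K h lam θ) (lm+1+1) j'' i t).w (lm+1+1) j''
              (H (lm+1) + k) = lam (k+1) * θ.w (lm+1+1) j'' h := by
          intro k hk
          have hkne : k ≠ k₀ := Finset.ne_of_mem_erase hk
          simp only [updW]
          rw [if_neg (by omega)]
          exact gammaEmb_out_new H (lm+1) K h lam θ j'' k hh
        have hLk₀ : (updW (gammaEmb H (lm+1) K h lam θ) (lm+1+1) j'' i t).w (lm+1+1) j''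
            (H (lm+1) + k₀) = t := by
          simp only [updW]; rw [if_pos ⟨by trivial, by trivial, by omega⟩]
        rw [hLh, ← Finset.sum_erase_add _ _ hmem, Finset.sum_congr rfl hLk, ← Finset.sum_mul,
          hLk₀, hlck]
        have hs2 : (∑ k ∈ (Finset.range K).erase k₀, lam (k+1)) + lam (k₀+1)
            = ∑ k ∈ Finset.range K, lam (k+1) := Finset.sum_erase_add _ _ hmem
        linear_combination θ.w (lm+1+1) j'' h * hs + θ.w (lm+1+1) j'' h * hs2
    · -- j'' ≠ j : row untouched
      have hRHS : (updW θ (lm+1+1) j h (t + (1 - lc) * θ.w (lm+1+1) j h)).w (lm+1+1) j'' h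
          = θ.w (lm+1+1) j'' h := by
        simp only [updW]; rw [if_neg (by tauto)]
      have hLh : (updW (gammaEmb H (lm+1) K h lam θ) (lm+1+1) j i t).w (lm+1+1) j'' h
          = lam 0 * θ.w (lm+1+1) j'' h := by
        simp only [updW]
        rw [if_neg (by tauto)]
        exact gammaEmb_out_h H (lm+1) K h lam θ j''
      have hLk : ∀ k ∈ Finset.range K,
          (updW (gammaEmb H (lm+1) K h lam θ) (lm+1+1) j i t).w (lm+1+1) j''
            (H (lm+1) + k) = lam (k+1) * θ.w (lm+1+1) j'' h := by
        intro k _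
        simp only [updW]
        rw [if_neg (by tauto)]
        exact gammaEmb_out_new H (lm+1) K h lam θ j'' k hh
      rw [hRHS, hLh, Finset.sum_congr rfl hLk, ← Finset.sum_mul]
      linear_combination θ.w (lm+1+1) j'' h * hs
  · -- outputs agree off the group
    intro s hs' hsh
    rw [hV s]
    exact hout_old s hs' hsh
  · rw [hV h]; exact hout_h
  · intro k _
    rw [hV h]; exact hout_new k

lemma gamma_step (g : ℝ → ℝ) (H : ℕ → ℕ) (L P : ℕ) {m : ℕ} (X Y : ℕ → ℕ → ℝ)
    (loss : (ℕ → ℝ) → (Fin m → ℝ) → ℝ)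
    (hg : Differentiable ℝ g)
    (hloss : ∀ y, Differentiable ℝ (fun z : EuclideanSpace ℝ (Fin m) => loss y z))
    (l K h : ℕ) (lam : ℕ → ℝ)
    (hl : 1 ≤ l) (hlL : l + 1 ≤ L) (hh : h < H l)
    (hsum : ∑ i ∈ Finset.range (K+1), lam i = 1)
    (θ : NNParams) (hθ : IsCritical g H L P X Y loss θ) :
    IsCritical g (enlargeH H l K) L P X Y loss (gammaEmb H l K h lam θ) := by
  obtain ⟨lm, rfl⟩ : ∃ lm, l = lm + 1 := ⟨l - 1, by omega⟩
  have hinv : ∀ ψ : NNParams,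
      Remp g (enlargeH H (lm+1) K) L P X Y loss (gammaEmb H (lm+1) K h lam ψ)
        = Remp g H L P X Y loss ψ :=
    fun ψ => gammaEmb_Remp g H L lm K h lam P X Y loss hlL hh hsum ψ
  obtain ⟨d, hLd⟩ : ∃ d, L = (lm + 1) + d + 1 := ⟨L - (lm+1) - 1, by omega⟩
  constructor
  · -- weight parameters
    intro ℓ j i h1 h2 hj hi
    by_cases hcl : ℓ = lm + 1
    · subst hcl
      have hi' : i < H lm := by
        rwa [show (lm+1) - 1 = lm from rfl, enlargeH_ne H (lm+1) K (by omega)] at hi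
      by_cases hcj : j < H (lm+1) ∧ j ≠ h
      · -- easy case: old non-duplicated row of layer l
        have hfun : (fun t => Remp g (enlargeH H (lm+1) K) L P X Y loss
              (updW (gammaEmb H (lm+1) K h lam θ) (lm+1) j i t))
            = fun t => Remp g H L P X Y loss (updW θ (lm+1) j i t) := by
          funext t
          rw [gammaEmb_updW_comm H (lm+1) K h lam θ (lm+1) j i t hh
            (Or.inr (Or.inl ⟨rfl, hcj.1, hcj.2⟩)), hinv]
        rw [hfun, gammaEmb_row_old H (lm+1) K h lam θ j i hcj.1 (by omega)]
        exact hθ.1 (lm+1) j i h1 h2 hcj.1 hi'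
      · -- HARD case: incoming weight of the duplicated group
        have hjK : j < H (lm+1) + K := by
          rwa [show enlargeH H (lm+1) K (lm+1) = H (lm+1) + K from if_pos rfl] at hj
        have hgrp : j = h ∨ H (lm+1) ≤ j := by
          rcases Nat.lt_or_ge j (H (lm+1)) with hlt | hge
          · left; by_contra hne; exact hcj ⟨hlt, hne⟩
          · right; exact hge
        have ht₀ : (gammaEmb H (lm+1) K h lam θ).w (lm+1) j i = θ.w (lm+1) h i := by
          rcases hgrp with hjh | hge
          · rw [hjh]; exact gammaEmb_row_old H (lm+1) K h lam θ h i hh (by omega)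
          · exact gammaEmb_row_new H (lm+1) K h lam θ j i hge
        have hlow : ∀ t : ℝ, ∀ ℓ'' j'' i'', 1 ≤ ℓ'' → ℓ'' ≤ lm →
            (updW θ (lm+1) h i t).w ℓ'' j'' i'' = θ.w ℓ'' j'' i'' :=
          fun t ℓ'' j'' i'' hx1 hx2 => by
            simp only [updW]; rw [if_neg (by omega)]
        refine hard_case g H L P X Y loss hg hloss lm K h lam hlL hh hsum θ j
          (if j = h then lam 0 else lam (j - H (lm+1) + 1)) ?_
          (fun t => updW θ (lm+1) h i t)
          (fun t => updW (gammaEmb H (lm+1) K h lam θ) (lm+1) j i t)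
          ((gammaEmb H (lm+1) K h lam θ).w (lm+1) j i)
          (fun p t => g ((∑ i' ∈ Finset.range (H lm),
              (if i' = i then t else θ.w (lm+1) h i') * layerOut g H θ (X p) lm i')
            + θ.b (lm+1) h))
          (fun p => deriv g ((∑ i' ∈ Finset.range (H lm),
              (if i' = i then (gammaEmb H (lm+1) K h lam θ).w (lm+1) j i
                else θ.w (lm+1) h i') * layerOut g H θ (X p) lm i') + θ.b (lm+1) h)
            * ∑ i' ∈ Finset.range (H lm),
              (if i' = i then layerOut g H θ (X p) lm i' else 0))
          ?_ ?_ ?_ ?_ ?_ ?_ ?_ ?_ ?_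
        · -- hc'
          rcases hgrp with hjh | hge
          · exact Or.inl ⟨hjh, by rw [if_pos hjh]⟩
          · refine Or.inr ⟨j - H (lm+1), by omega, by omega, ?_⟩
            rw [if_neg (by omega)]
        · -- hη
          intro p
          have hin : HasDerivAt (fun t => (∑ i' ∈ Finset.range (H lm),
              (if i' = i then t else θ.w (lm+1) h i') * layerOut g H θ (X p) lm i')
              + θ.b (lm+1) h)
              (∑ i' ∈ Finset.range (H lm),
                (if i' = i then layerOut g H θ (X p) lm i' else 0))
              ((gammaEmb H (lm+1) K h lam θ).w (lm+1) j i) := by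
            refine HasDerivAt.add_const _ ?_
            refine HasDerivAt.fun_sum fun i' _ => ?_
            by_cases hii : i' = i
            · simp only [if_pos hii]
              simpa using (hasDerivAt_id _).mul_const (layerOut g H θ (X p) lm i')
            · simp only [if_neg hii]
              exact hasDerivAt_const _ _
          exact ((hg _).hasDerivAt).comp _ hin
        · -- hΘ0
          rw [ht₀]; exact updW_self θ (lm+1) h i
        · -- hΘw
          intro t ℓ'' j'' i'' hn
          simp only [updW]; rw [if_neg (by tauto)]
        · -- hΘb
          intro t ℓ'' j'' _; rfl
        · -- hΘout
          intro t p
          simp only [layerOut]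
          congr 1
          refine congrArg₂ _ (Finset.sum_congr rfl fun i' _ => ?_) rfl
          have hw : (updW θ (lm+1) h i t).w (lm+1) h i'
              = if i' = i then t else θ.w (lm+1) h i' := by
            simp only [updW]
            by_cases hii : i' = i
            · rw [if_pos ⟨by trivial, by trivial, hii⟩, if_pos hii]
            · rw [if_neg (by tauto), if_neg hii]
          rw [hw, layerOut_congr g H H (updW θ (lm+1) h i t) θ (X p) lm
            (fun _ _ => rfl) (hlow t) (fun _ _ _ _ => rfl) i']
        · -- hΘ'w
          intro t ℓ'' j'' i'' hn
          simp only [updW]; rw [if_neg (by tauto)]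
        · -- hΘ'b
          intro t ℓ'' j'' _; rfl
        · -- hΘ'out
          intro t p
          simp only [layerOut]
          congr 1
          rw [show enlargeH H (lm+1) K lm = H lm from enlargeH_ne H (lm+1) K (by omega)]
          refine congrArg₂ _ (Finset.sum_congr rfl fun i' _ => ?_) ?_
          · have hw : (updW (gammaEmb H (lm+1) K h lam θ) (lm+1) j i t).w (lm+1) j i'
                = if i' = i then t else θ.w (lm+1) h i' := by
              simp only [updW]
              by_cases hii : i' = i
              · rw [if_pos ⟨by trivial, by trivial, hii⟩, if_pos hii]
              · rw [if_neg (by tauto), if_neg hii]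
                rcases hgrp with hjh | hge
                · rw [hjh]; exact gammaEmb_row_old H (lm+1) K h lam θ h i' hh (by omega)
                · exact gammaEmb_row_new H (lm+1) K h lam θ j i' hge
            rw [hw, layerOut_congr g (enlargeH H (lm+1) K) H
              (updW (gammaEmb H (lm+1) K h lam θ) (lm+1) j i t) θ (X p) lm
              (fun ℓ'' hlt => enlargeH_ne H (lm+1) K (by omega))
              (fun ℓ'' j'' i'' hx1 hx2 => by
                simp only [updW]
                rw [if_neg (by omega),
                  gammaEmb_low_w H (lm+1) K h lam θ ℓ'' j'' i'' (by omega) (by omega)])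
              (fun ℓ'' j'' hx1 hx2 =>
                gammaEmb_b_ne H (lm+1) K h lam θ ℓ'' j'' (by omega)) i']
          · show (gammaEmb H (lm+1) K h lam θ).b (lm+1) j = θ.b (lm+1) h
            rcases hgrp with hjh | hge
            · rw [hjh]; exact gammaEmb_b_ne H (lm+1) K h lam θ (lm+1) h (by omega)
            · exact gammaEmb_b_new H (lm+1) K h lam θ j hge
        · -- hcrit
          rw [ht₀]
          exact hθ.1 (lm+1) h i (by omega) (by omega) hh hi'
    · by_cases hcl2 : ℓ = lm + 1 + 1
      · subst hcl2
        have hj2 : j < H (lm+1+1) := by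
          rwa [enlargeH_ne H (lm+1) K (by omega)] at hj
        have hi2 : i < H (lm+1) + K := by
          rwa [show (lm+1+1) - 1 = lm+1 from rfl,
            show enlargeH H (lm+1) K (lm+1) = H (lm+1) + K from if_pos rfl] at hi
        by_cases hci : i < H (lm+1) ∧ i ≠ h
        · -- easy case: outgoing weight from an old non-duplicated unit
          have hfun : (fun t => Remp g (enlargeH H (lm+1) K) L P X Y loss
                (updW (gammaEmb H (lm+1) K h lam θ) (lm+1+1) j i t))
              = fun t => Remp g H L P X Y loss (updW θ (lm+1+1) j i t) := by
            funext t
            rw [gammaEmb_updW_comm H (lm+1) K h lam θ (lm+1+1) j i t hh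
              (Or.inr (Or.inr ⟨rfl, hci.1, hci.2⟩)), hinv]
          rw [hfun, gammaEmb_out_old H (lm+1) K h lam θ j i hci.1 hci.2]
          exact hθ.1 (lm+1+1) j i h1 h2 hj2 hci.1
        · -- affine case: outgoing weight of the duplicated group
          have higrp : i = h ∨ H (lm+1) ≤ i := by
            rcases Nat.lt_or_ge i (H (lm+1)) with hlt | hge
            · left; by_contra hne; exact hci ⟨hlt, hne⟩
            · right; exact hge
          obtain ⟨lc, hlc⟩ : ∃ lc : ℝ, (i = h ∧ lc = lam 0)
              ∨ (∃ k, k < K ∧ i = H (lm+1) + k ∧ lc = lam (k+1)) := by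
            rcases higrp with hih | hge
            · exact ⟨lam 0, Or.inl ⟨hih, rfl⟩⟩
            · exact ⟨lam (i - H (lm+1) + 1),
                Or.inr ⟨i - H (lm+1), by omega, by omega, rfl⟩⟩
          have ht0 : (gammaEmb H (lm+1) K h lam θ).w (lm+1+1) j i
              = lc * θ.w (lm+1+1) j h := by
            rcases hlc with ⟨hih, hlc0⟩ | ⟨k, hk, hik, hlck⟩
            · rw [hih, hlc0]; exact gammaEmb_out_h H (lm+1) K h lam θ j
            · rw [hik, hlck]; exact gammaEmb_out_new H (lm+1) K h lam θ j k hh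
          have hfun : (fun t => Remp g (enlargeH H (lm+1) K) L P X Y loss
                (updW (gammaEmb H (lm+1) K h lam θ) (lm+1+1) j i t))
              = fun t => Remp g H L P X Y loss
                  (updW θ (lm+1+1) j h (t + (1 - lc) * θ.w (lm+1+1) j h)) :=
            funext (affine_case g H L P X Y loss lm K h lam hlL hh hsum θ j i lc hlc)
          rw [hfun, ht0]
          refine Eq.trans (deriv_comp_add_const
            (fun s => Remp g H L P X Y loss (updW θ (lm+1+1) j h s))
            ((1 - lc) * θ.w (lm+1+1) j h) (lc * θ.w (lm+1+1) j h)) ?_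
          rw [show lc * θ.w (lm+1+1) j h + (1 - lc) * θ.w (lm+1+1) j h
            = θ.w (lm+1+1) j h from by ring]
          exact hθ.1 (lm+1+1) j h h1 h2 hj2 hh
      · -- easy case: layer away from l and l+1
        have hj3 : j < H ℓ := by rwa [enlargeH_ne H (lm+1) K hcl] at hj
        have hi3 : i < H (ℓ - 1) := by
          rwa [enlargeH_ne H (lm+1) K (by omega)] at hi
        have hfun : (fun t => Remp g (enlargeH H (lm+1) K) L P X Y loss
              (updW (gammaEmb H (lm+1) K h lam θ) ℓ j i t))
            = fun t => Remp g H L P X Y loss (updW θ ℓ j i t) := by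
          funext t
          rw [gammaEmb_updW_comm H (lm+1) K h lam θ ℓ j i t hh (Or.inl ⟨hcl, hcl2⟩), hinv]
        rw [hfun, gammaEmb_low_w H (lm+1) K h lam θ ℓ j i hcl hcl2]
        exact hθ.1 ℓ j i h1 h2 hj3 hi3
  · -- bias parameters
    intro ℓ j h1 h2 hj
    by_cases hcl : ℓ = lm + 1
    · subst hcl
      by_cases hcj : j < H (lm+1) ∧ j ≠ h
      · -- easy bias in layer l
        have hfun : (fun t => Remp g (enlargeH H (lm+1) K) L P X Y loss
              (updB (gammaEmb H (lm+1) K h lam θ) (lm+1) j t))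
            = fun t => Remp g H L P X Y loss (updB θ (lm+1) j t) := by
          funext t
          rw [gammaEmb_updB_comm H (lm+1) K h lam θ (lm+1) j t hh
            (Or.inr ⟨rfl, hcj.1, hcj.2⟩), hinv]
        rw [hfun, gammaEmb_b_ne H (lm+1) K h lam θ (lm+1) j (by omega)]
        exact hθ.2 (lm+1) j h1 h2 hcj.1
      · -- HARD bias case
        have hjK : j < H (lm+1) + K := by
          rwa [show enlargeH H (lm+1) K (lm+1) = H (lm+1) + K from if_pos rfl] at hj
        have hgrp : j = h ∨ H (lm+1) ≤ j := by
          rcases Nat.lt_or_ge j (H (lm+1)) with hlt | hge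
          · left; by_contra hne; exact hcj ⟨hlt, hne⟩
          · right; exact hge
        have ht₀ : (gammaEmb H (lm+1) K h lam θ).b (lm+1) j = θ.b (lm+1) h := by
          rcases hgrp with hjh | hge
          · rw [hjh]; exact gammaEmb_b_ne H (lm+1) K h lam θ (lm+1) h (by omega)
          · exact gammaEmb_b_new H (lm+1) K h lam θ j hge
        refine hard_case g H L P X Y loss hg hloss lm K h lam hlL hh hsum θ j
          (if j = h then lam 0 else lam (j - H (lm+1) + 1)) ?_
          (fun t => updB θ (lm+1) h t)
          (fun t => updB (gammaEmb H (lm+1) K h lam θ) (lm+1) j t)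
          ((gammaEmb H (lm+1) K h lam θ).b (lm+1) j)
          (fun p t => g ((∑ i' ∈ Finset.range (H lm),
              θ.w (lm+1) h i' * layerOut g H θ (X p) lm i') + t))
          (fun p => deriv g ((∑ i' ∈ Finset.range (H lm),
              θ.w (lm+1) h i' * layerOut g H θ (X p) lm i')
            + (gammaEmb H (lm+1) K h lam θ).b (lm+1) j) * 1)
          ?_ ?_ ?_ ?_ ?_ ?_ ?_ ?_ ?_
        · rcases hgrp with hjh | hge
          · exact Or.inl ⟨hjh, by rw [if_pos hjh]⟩
          · refine Or.inr ⟨j - H (lm+1), by omega, by omega, ?_⟩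
            rw [if_neg (by omega)]
        · -- hη
          intro p
          have hin : HasDerivAt (fun t => (∑ i' ∈ Finset.range (H lm),
              θ.w (lm+1) h i' * layerOut g H θ (X p) lm i') + t) 1
              ((gammaEmb H (lm+1) K h lam θ).b (lm+1) j) :=
            (hasDerivAt_id _).const_add _
          exact ((hg _).hasDerivAt).comp _ hin
        · rw [ht₀]; exact updB_self θ (lm+1) h
        · intro t ℓ'' j'' i'' _; rfl
        · intro t ℓ'' j'' hn
          simp only [updB]; rw [if_neg (by tauto)]
        · -- hΘout
          intro t p
          simp only [layerOut]
          congr 1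
          refine congrArg₂ _ (Finset.sum_congr rfl fun i' _ => ?_) ?_
          · rw [layerOut_congr g H H (updB θ (lm+1) h t) θ (X p) lm
              (fun _ _ => rfl) (fun _ _ _ _ _ => rfl)
              (fun ℓ'' j'' hx1 hx2 => by
                simp only [updB]; rw [if_neg (by omega)]) i']
            rfl
          · show (if (lm+1 = lm+1 ∧ h = h) then t else θ.b (lm+1) h) = t
            simp
        · intro t ℓ'' j'' i'' _; rfl
        · intro t ℓ'' j'' hn
          simp only [updB]; rw [if_neg (by tauto)]
        · -- hΘ'out
          intro t p
          simp only [layerOut]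
          congr 1
          rw [show enlargeH H (lm+1) K lm = H lm from enlargeH_ne H (lm+1) K (by omega)]
          refine congrArg₂ _ (Finset.sum_congr rfl fun i' _ => ?_) ?_
          · have hw : (updB (gammaEmb H (lm+1) K h lam θ) (lm+1) j t).w (lm+1) j i'
                = θ.w (lm+1) h i' := by
              show (gammaEmb H (lm+1) K h lam θ).w (lm+1) j i' = θ.w (lm+1) h i'
              rcases hgrp with hjh | hge
              · rw [hjh]; exact gammaEmb_row_old H (lm+1) K h lam θ h i' hh (by omega)
              · exact gammaEmb_row_new H (lm+1) K h lam θ j i' hge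
            rw [hw, layerOut_congr g (enlargeH H (lm+1) K) H
              (updB (gammaEmb H (lm+1) K h lam θ) (lm+1) j t) θ (X p) lm
              (fun ℓ'' hlt => enlargeH_ne H (lm+1) K (by omega))
              (fun ℓ'' j'' i'' hx1 hx2 =>
                gammaEmb_low_w H (lm+1) K h lam θ ℓ'' j'' i'' (by omega) (by omega))
              (fun ℓ'' j'' hx1 hx2 => by
                simp only [updB]
                rw [if_neg (by omega),
                  gammaEmb_b_ne H (lm+1) K h lam θ ℓ'' j'' (by omega)]) i']
          · show (if (lm+1 = lm+1 ∧ j = j) then t else _) = t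
            simp
        · rw [ht₀]
          exact hθ.2 (lm+1) h (by omega) (by omega) hh
    · -- easy bias away from layer l
      have hj3 : j < H ℓ := by rwa [enlargeH_ne H (lm+1) K hcl] at hj
      have hfun : (fun t => Remp g (enlargeH H (lm+1) K) L P X Y loss
            (updB (gammaEmb H (lm+1) K h lam θ) ℓ j t))
          = fun t => Remp g H L P X Y loss (updB θ ℓ j t) := by
        funext t
        rw [gammaEmb_updB_comm H (lm+1) K h lam θ ℓ j t hh (Or.inl hcl), hinv]
      rw [hfun, gammaEmb_b_ne H (lm+1) K h lam θ ℓ j (by tauto)]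
      exact hθ.2 ℓ j h1 h2 hj3

lemma multi_aux (g : ℝ → ℝ) (L P : ℕ) {m : ℕ} (X Y : ℕ → ℕ → ℝ)
    (loss : (ℕ → ℝ) → (Fin m → ℝ) → ℝ)
    (hg : Differentiable ℝ g)
    (hloss : ∀ y, Differentiable ℝ (fun z : EuclideanSpace ℝ (Fin m) => loss y z)) :
    ∀ (RG : List (ℕ × ℕ)) (H : ℕ → ℕ) (hsel : ℕ → ℕ) (lam : ℕ → ℕ → ℝ) (θ : NNParams),
    (RG.map Prod.fst).Nodup →
    (∀ p ∈ RG, 1 ≤ p.1 ∧ p.1 + 1 ≤ L ∧ hsel p.1 < H p.1 ∧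
      ∑ i ∈ Finset.range (p.2 + 1), lam p.1 i = 1) →
    IsCritical g H L P X Y loss θ →
    IsCritical g (multiEnlargeH H RG) L P X Y loss (multiGamma hsel lam H RG θ) := by
  intro RG
  induction RG with
  | nil => intro H hsel lam θ _ _ hcrit; exact hcrit
  | cons hd tl ih =>
    intro H hsel lam θ hnd hR hcrit
    obtain ⟨l, K⟩ := hd
    show IsCritical g (multiEnlargeH (enlargeH H l K) tl) L P X Y loss
      (multiGamma hsel lam (enlargeH H l K) tl (gammaEmb H l K (hsel l) (lam l) θ))
    obtain ⟨c1, c2, c3, c4⟩ := hR (l, K) List.mem_cons_self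
    have hnd' : (l :: tl.map Prod.fst).Nodup := by simpa using hnd
    have hnotin : l ∉ tl.map Prod.fst := (List.nodup_cons.mp hnd').1
    refine ih (enlargeH H l K) hsel lam _ (List.nodup_cons.mp hnd').2 ?_ ?_
    · intro q hq
      obtain ⟨d1, d2, d3, d4⟩ := hR q (List.mem_cons_of_mem _ hq)
      refine ⟨d1, d2, ?_, d4⟩
      rw [enlargeH_ne H l K (fun hql =>
        hnotin (hql ▸ List.mem_map_of_mem (f := Prod.fst) hq))]
      exact d3
    · exact gamma_step g H L P X Y loss hg hloss l K (hsel l) (lam l) c1 c2 c3 c4 θ hcrit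

/-- If `g` and the loss (in its second argument) are differentiable and
`θ` is a stationary point of the empirical risk of the original network, then the point
`θ̂ = G_λ(θ, R, Γ)` obtained by composing `γ` embeddings (adding `K_{r_i}` neurons to the
pairwise distinct hidden layers `r_i ∈ {1, …, L-1}`, each duplicating its own unit
`hsel r_i < H r_i` with coefficients `lam r_i` summing to one) is a stationary point of
the empirical risk of the enlarged network. -/
theorem multiGamma_is_critical
    (g : ℝ → ℝ) (H : ℕ → ℕ) (L P : ℕ) (X Y : ℕ → ℕ → ℝ)
    (loss : (ℕ → ℝ) → (Fin (H L) → ℝ) → ℝ)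
    (hg : Differentiable ℝ g)
    (hloss : ∀ y : ℕ → ℝ,
      Differentiable ℝ (fun z : EuclideanSpace ℝ (Fin (H L)) => loss y z))
    (RG : List (ℕ × ℕ)) (hnd : (RG.map Prod.fst).Nodup)
    (hsel : ℕ → ℕ) (lam : ℕ → ℕ → ℝ)
    (hR : ∀ p ∈ RG, 1 ≤ p.1 ∧ p.1 + 1 ≤ L ∧ hsel p.1 < H p.1 ∧
      ∑ i ∈ Finset.range (p.2 + 1), lam p.1 i = 1)
    (θ : NNParams) (hθ : IsCritical g H L P X Y loss θ)
    (θhat : NNParams) (hemb : θhat = multiGamma hsel lam H RG θ) :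
    IsCritical g (multiEnlargeH H RG) L P X Y loss θhat := by
  subst hemb
  exact multi_aux g L P X Y loss hg hloss RG H hsel lam θ hnd hR hθ
end
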